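/- arXiv:2302.03994 — 10 statements merged into one kernel-verified Lean document; each statement's English description precedes it below -/
import Mathlib

section
/- For all p in (0, 1), the binary entropy satisfies H(p) ≤ (log p · log(1−p)) / log 2 (natural logarithms). -/
/-!
Write `L x = (x - 1) / log x` for the logarithmic mean of `x` and `1`. Since
`H(p) = -p log p - (1 - p) log (1 - p)`, dividing by `log p · log (1 - p) > 0` gives
`H(p) / (log p · log (1 - p)) = L p + L (1 - p)`. On `(0, 1)` the second derivative of `L` is
`(2 (x - 1) - (x + 1) log x) / (x² log³ x) ≤ 0` by the Padé bound
`log x ≤ 2 (x - 1) / (x + 1)`, so `L` is concave there and Jensen's inequality gives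
`L p + L (1 - p) ≤ 2 L (1/2) = 1 / log 2`.
-/

noncomputable def binEnt (p : ℝ) : ℝ :=
  p * Real.log (1 / p) + (1 - p) * Real.log (1 / (1 - p))

open Real Set

theorem Real.log_le_two_mul_sub_one_div_add_one {x : ℝ} (hx0 : 0 < x) (hx1 : x ≤ 1) :
    log x ≤ 2 * (x - 1) / (x + 1) := by
  -- `t ≤ artanh t` at `t = (1 - x) / (1 + x)`, where `artanh t = -log x / 2`
  have ht0 : 0 ≤ (1 - x) / (1 + x) := div_nonneg (by linarith) (by linarith)
  have ht1 : (1 - x) / (1 + x) < 1 := (div_lt_one (by linarith)).2 (by linarith)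
  have key := sum_range_le_log_div ht0 ht1 1
  have hinv : (1 + (1 - x) / (1 + x)) / (1 - (1 - x) / (1 + x)) = x⁻¹ := by
    field_simp; ring_nf; field_simp
  simp only [Finset.sum_range_one, hinv, log_inv] at key
  norm_num at key
  rw [div_le_iff₀ (by linarith)] at key
  rw [le_div_iff₀ (by linarith)]
  linarith

/-- The logarithmic mean of `x` and `1` (with the junk value `0` at `x = 1`). -/
noncomputable def logMean (x : ℝ) : ℝ := (x - 1) / log x

theorem hasDerivAt_logMean {x : ℝ} (hx0 : 0 < x) (hx1 : x ≠ 1) :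
    HasDerivAt logMean ((log x - (x - 1) / x) / log x ^ 2) x := by
  have hlog : log x ≠ 0 := log_ne_zero_of_pos_of_ne_one hx0 hx1
  refine (((hasDerivAt_id' x).sub_const 1).div (hasDerivAt_log hx0.ne') hlog).congr_deriv ?_
  field_simp

theorem hasDerivAt_deriv_logMean {x : ℝ} (hx0 : 0 < x) (hx1 : x ≠ 1) :
    HasDerivAt (fun y => (log y - (y - 1) / y) / log y ^ 2)
      ((2 * (x - 1) - (x + 1) * log x) / (x ^ 2 * log x ^ 3)) x := by
  have hlog : log x ≠ 0 := log_ne_zero_of_pos_of_ne_one hx0 hx1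
  have hlog' := hasDerivAt_log hx0.ne'
  refine (((hlog'.fun_sub (((hasDerivAt_id' x).sub_const 1).fun_div (hasDerivAt_id' x)
    hx0.ne')).fun_div (hlog'.fun_pow 2) (pow_ne_zero 2 hlog))).congr_deriv ?_
  field_simp
  ring

theorem concaveOn_logMean : ConcaveOn ℝ (Ioo 0 1) logMean := by
  refine concaveOn_of_hasDerivWithinAt2_nonpos (f' := fun y => (log y - (y - 1) / y) / log y ^ 2)
    (f'' := fun y => (2 * (y - 1) - (y + 1) * log y) / (y ^ 2 * log y ^ 3)) (convex_Ioo 0 1)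
    (fun x hx => (hasDerivAt_logMean hx.1 hx.2.ne).continuousAt.continuousWithinAt)
    (fun x hx => ?_) (fun x hx => ?_) (fun x hx => ?_) <;> rw [interior_Ioo] at hx
  · exact (hasDerivAt_logMean hx.1 hx.2.ne).hasDerivWithinAt
  · exact (hasDerivAt_deriv_logMean hx.1 hx.2.ne).hasDerivWithinAt
  · have hlog : log x < 0 := log_neg hx.1 hx.2
    have hpade := log_le_two_mul_sub_one_div_add_one hx.1 hx.2.le
    rw [le_div_iff₀ (by linarith [hx.1])] at hpade
    refine div_nonpos_of_nonneg_of_nonpos (by linarith) ?_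
    exact mul_nonpos_of_nonneg_of_nonpos (sq_nonneg x) (Odd.pow_nonpos (by decide) hlog.le)

theorem logMean_half : logMean (1 / 2) = 1 / (2 * log 2) := by
  rw [logMean, one_div, log_inv]
  field_simp
  ring

theorem binEnt_eq_mul_logMean {p : ℝ} (hp : p ∈ Ioo 0 1) :
    binEnt p = log p * log (1 - p) * (logMean p + logMean (1 - p)) := by
  have hlp : log p ≠ 0 := (log_neg hp.1 hp.2).ne
  have hlq : log (1 - p) ≠ 0 := (log_neg (by linarith [hp.2]) (by linarith [hp.1])).ne
  rw [binEnt, logMean, logMean, one_div, one_div, log_inv, log_inv]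
  field_simp
  ring

/-- Topsøe's bound: for all `p ∈ (0,1)`, `H(p) ≤ log(p)·log(1−p)/log 2`. -/
theorem stmt1 (p : ℝ) (hp0 : 0 < p) (hp1 : p < 1) :
    binEnt p ≤ Real.log p * Real.log (1 - p) / Real.log 2 := by
  have hp : p ∈ Ioo (0 : ℝ) 1 := ⟨hp0, hp1⟩
  have hq : 1 - p ∈ Ioo (0 : ℝ) 1 := ⟨by linarith, by linarith⟩
  have hjensen := concaveOn_logMean.2 hp hq (by norm_num : (0 : ℝ) ≤ 1 / 2)
    (by norm_num : (0 : ℝ) ≤ 1 / 2) (by norm_num)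
  have hsum : logMean p + logMean (1 - p) ≤ 1 / log 2 := by
    simp only [smul_eq_mul, show 1 / 2 * p + 1 / 2 * (1 - p) = (1 / 2 : ℝ) by ring,
      logMean_half, show 1 / (2 * log 2) = 1 / 2 * (1 / log 2) by ring] at hjensen
    linarith
  have hlogs : 0 < log p * log (1 - p) :=
    mul_pos_of_neg_of_neg (log_neg hp0 hp1) (log_neg hq.1 hq.2)
  calc binEnt p = log p * log (1 - p) * (logMean p + logMean (1 - p)) := binEnt_eq_mul_logMean hp
    _ ≤ log p * log (1 - p) * (1 / log 2) := by gcongr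
    _ = log p * log (1 - p) / log 2 := by ring
end

section
/- Let S be a finite multiset of labeled examples with labels in {1,…,k} and let S' = S + s be obtained by inserting one labeled example s. Then |Gini(S) − Gini(S')| ≤ 4 / max(|S|, |S'|), where Gini(S) = 1 − Σᵢ pᵢ(S)² and pᵢ(S) is the fraction of elements of S with label i. -/
/-!
Adding one element `a` to a multiset of size `n` moves each label frequency by the running-mean
update `p' = p + (δ_a - p) / (n + 1)`, so the frequency vector moves by at most `2 / (n + 1)`
in `ℓ¹`. Since frequencies lie in `[0, 1]`, `|p'² - p²| ≤ 2 |p' - p|`, and summing over the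
labels bounds the change of the Gini impurity by `4 / (n + 1)`.
-/

/-- `pFrac i S` is the fraction of elements of the multiset `S` with label `i`. -/
noncomputable def pFrac {k : ℕ} (i : Fin k) (S : Multiset (Fin k)) : ℝ :=
  (S.count i : ℝ) / S.card

/-- Gini impurity of a multiset of labels in `{1,…,k}`. -/
noncomputable def gini {k : ℕ} (S : Multiset (Fin k)) : ℝ :=
  1 - ∑ i : Fin k, (pFrac i S) ^ 2

theorem abs_sum_sq_sub_sum_sq_le {ι : Type*} (s : Finset ι) (p q : ι → ℝ)
    (hp : ∀ i ∈ s, |p i| ≤ 1) (hq : ∀ i ∈ s, |q i| ≤ 1) :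
    |∑ i ∈ s, q i ^ 2 - ∑ i ∈ s, p i ^ 2| ≤ 2 * ∑ i ∈ s, |q i - p i| := by
  rw [← Finset.sum_sub_distrib, Finset.mul_sum]
  refine (Finset.abs_sum_le_sum_abs _ _).trans (Finset.sum_le_sum fun i hi => ?_)
  have hsum : |q i + p i| ≤ 2 := (abs_add_le _ _).trans (by linarith [hp i hi, hq i hi])
  calc |q i ^ 2 - p i ^ 2| = |q i + p i| * |q i - p i| := by rw [sq_sub_sq, abs_mul]
    _ ≤ 2 * |q i - p i| := by gcongr

namespace Multiset

variable {k : ℕ}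

theorem pFrac_nonneg (i : Fin k) (S : Multiset (Fin k)) : 0 ≤ pFrac i S := by
  unfold pFrac; positivity

theorem pFrac_le_one (i : Fin k) (S : Multiset (Fin k)) : pFrac i S ≤ 1 :=
  div_le_one_of_le₀ (mod_cast S.count_le_card i) (Nat.cast_nonneg _)

theorem abs_pFrac_le_one (i : Fin k) (S : Multiset (Fin k)) : |pFrac i S| ≤ 1 := by
  rw [abs_of_nonneg (pFrac_nonneg i S)]; exact pFrac_le_one i S

theorem sum_pFrac_le_one (S : Multiset (Fin k)) : ∑ i, pFrac i S ≤ 1 := by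
  have hcount : ∑ i, (S.count i : ℝ) = S.card := mod_cast S.sum_count_eq_card (by simp)
  simp only [pFrac]
  rw [← Finset.sum_div, hcount]
  exact div_self_le_one _

theorem count_eq_pFrac_mul_card (i : Fin k) (S : Multiset (Fin k)) :
    (S.count i : ℝ) = pFrac i S * S.card := by
  rcases eq_or_ne S 0 with rfl | hS
  · simp
  · rw [pFrac, div_mul_cancel₀ _ (mod_cast (card_pos.mpr hS).ne')]

-- Unconditional: for `S = 0` both sides equal the indicator of `a`, since `pFrac i 0 = 0 / 0 = 0`.
theorem pFrac_cons_sub_pFrac (a i : Fin k) (S : Multiset (Fin k)) :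
    pFrac i (a ::ₘ S) - pFrac i S = ((if i = a then 1 else 0) - pFrac i S) / (S.card + 1) := by
  have hcard : (S.card : ℝ) + 1 ≠ 0 := by positivity
  rw [pFrac, count_cons, card_cons]
  push_cast
  rw [count_eq_pFrac_mul_card]
  field_simp
  ring

theorem sum_abs_pFrac_cons_sub_pFrac_le (a : Fin k) (S : Multiset (Fin k)) :
    ∑ i, |pFrac i (a ::ₘ S) - pFrac i S| ≤ 2 / (S.card + 1) := by
  have hindicator : ∑ i : Fin k, |(if i = a then (1 : ℝ) else 0) - pFrac i S| ≤ 2 :=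
    calc ∑ i : Fin k, |(if i = a then (1 : ℝ) else 0) - pFrac i S|
        ≤ ∑ i : Fin k, ((if i = a then (1 : ℝ) else 0) + pFrac i S) :=
          Finset.sum_le_sum fun i _ => (abs_sub _ _).trans <| by
            rw [abs_of_nonneg (by split_ifs <;> norm_num), abs_of_nonneg (pFrac_nonneg i S)]
      _ ≤ 2 := by
          rw [Finset.sum_add_distrib, Finset.sum_ite_eq' Finset.univ a, if_pos (Finset.mem_univ a)]
          linarith [S.sum_pFrac_le_one]
  simp_rw [pFrac_cons_sub_pFrac, abs_div, abs_of_pos (by positivity : (0 : ℝ) < S.card + 1),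
    ← Finset.sum_div]
  gcongr

theorem gini_sub_gini_cons (a : Fin k) (S : Multiset (Fin k)) :
    gini S - gini (a ::ₘ S) = ∑ i, pFrac i (a ::ₘ S) ^ 2 - ∑ i, pFrac i S ^ 2 := by
  simp only [gini]; ring

theorem abs_gini_sub_gini_cons_le (a : Fin k) (S : Multiset (Fin k)) :
    |gini S - gini (a ::ₘ S)| ≤ 4 / (S.card + 1) :=
  calc |gini S - gini (a ::ₘ S)|
      ≤ 2 * ∑ i, |pFrac i (a ::ₘ S) - pFrac i S| := by
        rw [gini_sub_gini_cons]
        exact abs_sum_sq_sub_sum_sq_le _ _ _ (fun i _ => abs_pFrac_le_one i S)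
          (fun i _ => abs_pFrac_le_one i _)
    _ ≤ 2 * (2 / (S.card + 1)) := by gcongr; exact sum_abs_pFrac_cons_sub_pFrac_le a S
    _ = 4 / (S.card + 1) := by ring

end Multiset

theorem stmt2_general {k : ℕ} (S : Multiset (Fin k)) (s : Fin k) :
    |gini S - gini (s ::ₘ S)| ≤ 4 / ((max S.card (s ::ₘ S).card : ℕ) : ℝ) := by
  rw [Multiset.card_cons, max_eq_right (Nat.le_succ _), Nat.cast_succ]
  exact Multiset.abs_gini_sub_gini_cons_le s S

/-- Inserting a single labeled example changes the Gini impurity by at most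
`4 / max(|S|, |S'|)`. -/
theorem stmt2 {k : ℕ} (S : Multiset (Fin k)) (hS : S ≠ 0) (s : Fin k) :
    |gini S - gini (s ::ₘ S)| ≤ 4 / ((max S.card (s ::ₘ S).card : ℕ) : ℝ) :=
  stmt2_general S s
end

section
/- Let S be a nonempty finite multiset of labeled examples and S' = S + s obtained by inserting one element. Let H(S) denote the Shannon entropy (base-e) of the empirical label distribution of S. If n = max(|S|,|S'|) ≥ 2, then |H(S) − H(S')| < 5·(log n)/n. -/
/-!
Write `H(S) = log m - (∑ᵢ cᵢ log cᵢ) / m` with `m = |S|` and label counts `cᵢ`. The sum lies in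
`[0, m log m]`, and inserting `s` only raises one count `c` to `c + 1`, adding
`(c + 1) log (c + 1) - c log c = log (c + 1) + c log (1 + 1/c) ∈ [0, log (c + 1) + 1]`.
Comparing `H(S)` with `H(S + s)` then leaves only terms of size `O(log (m + 1) / (m + 1))`.
-/

open Finset Real

noncomputable def entS {k : ℕ} (S : Multiset (Fin k)) : ℝ :=
  ∑ i : Fin k, ((S.count i : ℝ) / S.card) * Real.log ((S.card : ℝ) / S.count i)

lemma mul_log_add_one_div_self_mem_Icc {c : ℝ} (hc : 0 ≤ c) :
    c * log ((c + 1) / c) ∈ Set.Icc 0 1 := by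
  rcases hc.eq_or_lt with rfl | hc
  · simp
  have hlog : log ((c + 1) / c) ≤ 1 / c := by
    have h := log_le_sub_one_of_pos (show 0 < (c + 1) / c by positivity)
    rwa [show (c + 1) / c - 1 = 1 / c by field_simp; ring] at h
  refine ⟨mul_nonneg hc.le (log_nonneg ?_), ?_⟩
  · rw [le_div_iff₀ hc]; linarith
  · calc c * log ((c + 1) / c) ≤ c * (1 / c) := by gcongr
      _ = 1 := by field_simp

lemma mul_log_add_one_sub_mul_log_mem_Icc {c : ℝ} (hc : 0 ≤ c) :
    (c + 1) * log (c + 1) - c * log c ∈ Set.Icc 0 (log (c + 1) + 1) := by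
  have hsplit : (c + 1) * log (c + 1) - c * log c = log (c + 1) + c * log ((c + 1) / c) := by
    rcases hc.eq_or_lt with rfl | hc
    · simp
    · rw [log_div (by positivity) hc.ne']; ring
  obtain ⟨h0, h1⟩ := mul_log_add_one_div_self_mem_Icc hc
  rw [hsplit]
  exact ⟨add_nonneg (log_nonneg (by linarith)) h0, by linarith⟩

lemma log_add_one_sub_log_lt {x : ℝ} (hx : 0 < x) : log (x + 1) - log x < 1 / x := by
  rw [← log_div (by positivity) hx.ne']
  have h := log_lt_sub_one_of_pos (show 0 < (x + 1) / x by positivity)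
    (by rw [Ne, div_eq_one_iff_eq hx.ne']; linarith)
  rwa [show (x + 1) / x - 1 = 1 / x by field_simp; ring] at h

lemma two_add_log_lt_five_mul_log {x : ℝ} (hx : 2 ≤ x) : 2 + log x < 5 * log x := by
  have : log 2 ≤ log x := log_le_log (by norm_num) hx
  linarith [log_two_gt_d9]

section EntropyStep

variable {M A d : ℝ}

lemma entropy_step_upper (hM : 1 ≤ M) (hA : A ≤ M * log M) (hd : 0 ≤ d) :
    (log (M + 1) - (A + d) / (M + 1)) - (log M - A / M) < (2 + log (M + 1)) / (M + 1) := by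
  have hM0 : 0 < M := by linarith
  have hsplit : (log (M + 1) - (A + d) / (M + 1)) - (log M - A / M)
      = (log (M + 1) - log M) + A / (M * (M + 1)) - d / (M + 1) := by
    field_simp; ring
  have hlog : log (M + 1) - log M < 2 / (M + 1) :=
    (log_add_one_sub_log_lt hM0).trans_le (by rw [div_le_div_iff₀ hM0 (by linarith)]; linarith)
  have hA' : A / (M * (M + 1)) ≤ log (M + 1) / (M + 1) :=
    calc A / (M * (M + 1)) ≤ M * log M / (M * (M + 1)) := by gcongr
      _ = log M / (M + 1) := mul_div_mul_left _ _ hM0.ne'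
      _ ≤ log (M + 1) / (M + 1) := by gcongr; linarith
  have hd' : 0 ≤ d / (M + 1) := by positivity
  rw [hsplit, add_div]
  linarith

lemma entropy_step_lower (hM : 0 < M) (hA : 0 ≤ A) (hd : d ≤ log (M + 1) + 1) :
    (log M - A / M) - (log (M + 1) - (A + d) / (M + 1)) ≤ (1 + log (M + 1)) / (M + 1) := by
  have hsplit : (log M - A / M) - (log (M + 1) - (A + d) / (M + 1))
      = d / (M + 1) - (log (M + 1) - log M) - A / (M * (M + 1)) := by
    field_simp; ring
  have hlog : log M ≤ log (M + 1) := log_le_log hM (by linarith)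
  have hA' : 0 ≤ A / (M * (M + 1)) := by positivity
  have hd' : d / (M + 1) ≤ (1 + log (M + 1)) / (M + 1) := by gcongr; linarith
  rw [hsplit]
  linarith

lemma abs_entropy_step_lt (hM : 1 ≤ M) (hA₀ : 0 ≤ A) (hA : A ≤ M * log M) (hd₀ : 0 ≤ d)
    (hd : d ≤ log (M + 1) + 1) :
    |(log M - A / M) - (log (M + 1) - (A + d) / (M + 1))| < 5 * log (M + 1) / (M + 1) := by
  have hbound : (2 + log (M + 1)) / (M + 1) < 5 * log (M + 1) / (M + 1) := by
    gcongr; exact two_add_log_lt_five_mul_log (by linarith)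
  have hle : (1 + log (M + 1)) / (M + 1) ≤ (2 + log (M + 1)) / (M + 1) := by
    gcongr; norm_num
  rw [abs_sub_lt_iff]
  constructor
  · linarith [entropy_step_lower (by linarith) hA₀ hd]
  · linarith [entropy_step_upper hM hA hd₀]

end EntropyStep

section CountEntropy

variable {k : ℕ}

noncomputable def sumCountMulLog (S : Multiset (Fin k)) : ℝ :=
  ∑ i : Fin k, (S.count i : ℝ) * log (S.count i)

lemma sum_count_fin_eq_card (S : Multiset (Fin k)) : ∑ i : Fin k, (S.count i : ℝ) = S.card := by
  exact_mod_cast Multiset.sum_count_eq_card fun a _ => mem_univ a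

lemma entS_eq_log_card_sub (S : Multiset (Fin k)) :
    entS S = log S.card - sumCountMulLog S / S.card := by
  rcases eq_or_ne S 0 with rfl | hS
  · simp [entS, sumCountMulLog]
  have hm : (S.card : ℝ) ≠ 0 := by exact_mod_cast (Multiset.card_pos.mpr hS).ne'
  have hterm : ∀ i, (S.count i : ℝ) / S.card * log (S.card / S.count i)
      = ((S.count i : ℝ) * log S.card - S.count i * log (S.count i)) / S.card := by
    intro i
    rcases eq_or_ne (S.count i) 0 with h | h
    · simp [h]
    · rw [log_div hm (by exact_mod_cast h)]; ring
  simp only [entS, sumCountMulLog, hterm, ← sum_div, sum_sub_distrib, ← sum_mul,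
    sum_count_fin_eq_card]
  field_simp

lemma sumCountMulLog_cons (S : Multiset (Fin k)) (s : Fin k) :
    sumCountMulLog (s ::ₘ S) = sumCountMulLog S +
      (((S.count s : ℝ) + 1) * log (S.count s + 1) - S.count s * log (S.count s)) := by
  have hterm : ∀ i, ((s ::ₘ S).count i : ℝ) * log ((s ::ₘ S).count i) =
      S.count i * log (S.count i) + if i = s then
        ((S.count s : ℝ) + 1) * log (S.count s + 1) - S.count s * log (S.count s) else 0 := by
    intro i
    rcases eq_or_ne i s with rfl | h
    · simp only [Multiset.count_cons_self, if_true]; push_cast; ring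
    · simp [Multiset.count_cons_of_ne h, h]
  simp only [sumCountMulLog, hterm, sum_add_distrib, sum_ite_eq', mem_univ, if_true]

lemma sumCountMulLog_nonneg (S : Multiset (Fin k)) : 0 ≤ sumCountMulLog S :=
  sum_nonneg fun _ _ => mul_nonneg (Nat.cast_nonneg _) (log_natCast_nonneg _)

lemma sumCountMulLog_le (S : Multiset (Fin k)) : sumCountMulLog S ≤ S.card * log S.card := by
  calc sumCountMulLog S ≤ ∑ i : Fin k, (S.count i : ℝ) * log S.card := by
        refine sum_le_sum fun i _ => ?_
        rcases Nat.eq_zero_or_pos (S.count i) with h | h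
        · simp [h]
        · gcongr
          exact_mod_cast S.count_le_card i
    _ = S.card * log S.card := by rw [← sum_mul, sum_count_fin_eq_card]

end CountEntropy

theorem stmt3_general {k : ℕ} (S : Multiset (Fin k)) (hS : S ≠ 0) (s : Fin k)
    (n : ℕ) (hn : n = max S.card (s ::ₘ S).card) :
    |entS S - entS (s ::ₘ S)| < 5 * Real.log n / n := by
  have hM : (1 : ℝ) ≤ S.card := by exact_mod_cast Multiset.card_pos.mpr hS
  have hn : (n : ℝ) = S.card + 1 := by simp [hn]
  obtain ⟨hd₀, hd⟩ := mul_log_add_one_sub_mul_log_mem_Icc (c := S.count s) (Nat.cast_nonneg _)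
  have hc : log ((S.count s : ℝ) + 1) ≤ log (S.card + 1) :=
    log_le_log (by positivity) (by gcongr; exact_mod_cast S.count_le_card s)
  rw [entS_eq_log_card_sub, entS_eq_log_card_sub, sumCountMulLog_cons, Multiset.card_cons,
    hn, Nat.cast_succ]
  exact abs_entropy_step_lt hM (sumCountMulLog_nonneg S) (sumCountMulLog_le S) hd₀
    (hd.trans (by linarith))

/-- Inserting one element into a nonempty multiset `S` changes the empirical entropy
by less than `5 (log n)/n` where `n = max(|S|,|S+s|)`. -/
theorem stmt3 {k : ℕ} (S : Multiset (Fin k)) (hS : S ≠ 0) (s : Fin k)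
    (n : ℕ) (hn : n = max S.card (s ::ₘ S).card) (h2 : 2 ≤ n) :
    |entS S - entS (s ::ₘ S)| < 5 * Real.log n / n :=
  stmt3_general S hS s n hn
end

section
/- Let S be a nonempty finite multiset of real numbers all bounded in absolute value by c, and let S' = S + s for one additional element s with |s| ≤ c. Then |var(S) − var(S')| ≤ 12c² / max(|S|, |S'|), where var(S) = (1/|S|²)·Σ_{y,y'∈S} (y − y')². -/
/-- `mvar S = (1/|S|²) Σ_{y,y'∈S} (y−y')²` (sum over ordered pairs of the multiset). -/
noncomputable def mvar (S : Multiset ℝ) : ℝ :=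
  (S.bind fun y => S.map fun y' => (y - y') ^ 2).sum / (S.card : ℝ) ^ 2

/-!
With `D = Σ_{y∈S} (s - y)²` and `T = Σ_{y,y'∈S} (y - y')²`, adding `s` turns `T` into `T + 2D`.
Every square is at most `K = 4c²`, so `T ≤ Kn²` and `D ≤ Kn` for `n = |S|`. Since
`T/n² - (T + 2D)/(n+1)² = (T(2n+1)/n² - 2D)/(n+1)²`, the change lies between `-2Kn/(n+1)²`
and `K(2n+1)/(n+1)²`, hence is at most `2K/(n+1) = 8c²/(n+1)` in absolute value.
-/

theorem sq_sub_le_four_mul_sq {a b c : ℝ} (ha : |a| ≤ c) (hb : |b| ≤ c) :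
    (a - b) ^ 2 ≤ 4 * c ^ 2 := by
  have h : |a - b| ≤ 2 * c := (abs_sub a b).trans (by linarith)
  calc (a - b) ^ 2 = |a - b| ^ 2 := (sq_abs _).symm
    _ ≤ (2 * c) ^ 2 := pow_le_pow_left₀ (abs_nonneg _) h 2
    _ = 4 * c ^ 2 := by ring

namespace Multiset

noncomputable def sumSqDist (S : Multiset ℝ) (a : ℝ) : ℝ :=
  (S.map fun y => (a - y) ^ 2).sum

noncomputable def sumPairSqDist (S : Multiset ℝ) : ℝ :=
  (S.map S.sumSqDist).sum

theorem sumSqDist_nonneg (S : Multiset ℝ) (a : ℝ) : 0 ≤ S.sumSqDist a :=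
  sum_nonneg fun _ hx => by
    obtain ⟨y, -, rfl⟩ := mem_map.mp hx
    exact sq_nonneg _

theorem sumPairSqDist_nonneg (S : Multiset ℝ) : 0 ≤ S.sumPairSqDist :=
  sum_nonneg fun _ hx => by
    obtain ⟨y, -, rfl⟩ := mem_map.mp hx
    exact S.sumSqDist_nonneg y

@[simp]
theorem sumSqDist_cons (S : Multiset ℝ) (a b : ℝ) :
    (b ::ₘ S).sumSqDist a = (a - b) ^ 2 + S.sumSqDist a := by
  simp [sumSqDist]

theorem sumPairSqDist_cons (S : Multiset ℝ) (s : ℝ) :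
    (s ::ₘ S).sumPairSqDist = S.sumPairSqDist + 2 * S.sumSqDist s := by
  have hsymm : (S.map fun y => (y - s) ^ 2).sum = S.sumSqDist s :=
    congrArg sum (map_congr rfl fun y _ => by ring)
  simp only [sumPairSqDist, map_cons, sum_cons, sumSqDist_cons, sum_map_add, hsymm]
  ring

variable {S : Multiset ℝ} {c : ℝ}

theorem sumSqDist_le (hS : ∀ y ∈ S, |y| ≤ c) {a : ℝ} (ha : |a| ≤ c) :
    S.sumSqDist a ≤ S.card * (4 * c ^ 2) := by
  have h := sum_le_card_nsmul (S.map fun y => (a - y) ^ 2) (4 * c ^ 2) fun _ hx => by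
    obtain ⟨y, hy, rfl⟩ := mem_map.mp hx
    exact sq_sub_le_four_mul_sq ha (hS y hy)
  simpa [sumSqDist, nsmul_eq_mul] using h

theorem sumPairSqDist_le (hS : ∀ y ∈ S, |y| ≤ c) :
    S.sumPairSqDist ≤ (S.card : ℝ) ^ 2 * (4 * c ^ 2) := by
  have h := sum_le_card_nsmul (S.map S.sumSqDist) (S.card * (4 * c ^ 2)) fun _ hx => by
    obtain ⟨y, hy, rfl⟩ := mem_map.mp hx
    exact sumSqDist_le hS (hS y hy)
  rw [card_map, nsmul_eq_mul] at h
  exact h.trans_eq (by ring)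

end Multiset

theorem mvar_eq_sumPairSqDist_div (S : Multiset ℝ) :
    mvar S = S.sumPairSqDist / (S.card : ℝ) ^ 2 := by
  rw [mvar, Multiset.sumPairSqDist, Multiset.sum_bind]
  rfl

theorem abs_div_sq_sub_div_add_one_sq_le {T D N K : ℝ} (hN : 0 ≤ N) (hK : 0 ≤ K)
    (hT₀ : 0 ≤ T) (hT : T ≤ N ^ 2 * K) (hD₀ : 0 ≤ D) (hD : D ≤ N * K) :
    |T / N ^ 2 - (T + 2 * D) / (N + 1) ^ 2| ≤ 2 * K / (N + 1) := by
  rcases hN.eq_or_lt with rfl | hN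
  · obtain rfl : T = 0 := le_antisymm (by simpa using hT) hT₀
    obtain rfl : D = 0 := le_antisymm (by simpa using hD) hD₀
    simpa using hK
  rw [abs_sub_le_iff, div_sub_div _ _ (by positivity) (by positivity),
    div_sub_div _ _ (by positivity) (by positivity),
    div_le_div_iff₀ (by positivity) (by positivity), div_le_div_iff₀ (by positivity) (by positivity)]
  constructor
  · nlinarith [mul_le_mul_of_nonneg_right hT (by positivity : (0:ℝ) ≤ (2 * N + 1) * (N + 1)),
      mul_nonneg hD₀ (by positivity : (0:ℝ) ≤ N ^ 2 * (N + 1)), mul_nonneg hK hN.le,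
      mul_nonneg (mul_nonneg hK hN.le) hN.le]
  · nlinarith [mul_le_mul_of_nonneg_right hD (by positivity : (0:ℝ) ≤ N ^ 2 * (N + 1)),
      mul_nonneg hT₀ hN.le, mul_nonneg (mul_nonneg hT₀ hN.le) hN.le, mul_nonneg hK hN.le]

theorem stmt4_general (S : Multiset ℝ) (c : ℝ) (hb : ∀ y ∈ S, |y| ≤ c)
    (s : ℝ) (hs : |s| ≤ c) :
    |mvar S - mvar (s ::ₘ S)| ≤ 12 * c ^ 2 / ((max S.card (s ::ₘ S).card : ℕ) : ℝ) := by
  rw [mvar_eq_sumPairSqDist_div, mvar_eq_sumPairSqDist_div, Multiset.sumPairSqDist_cons,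
    Multiset.card_cons, max_eq_right (Nat.le_succ _)]
  push_cast
  calc _ ≤ 2 * (4 * c ^ 2) / (S.card + 1) :=
        abs_div_sq_sub_div_add_one_sq_le (Nat.cast_nonneg _) (by positivity)
          S.sumPairSqDist_nonneg (Multiset.sumPairSqDist_le hb)
          (S.sumSqDist_nonneg s) (Multiset.sumSqDist_le hb hs)
    _ ≤ 12 * c ^ 2 / (S.card + 1) := by gcongr ?_ / _; nlinarith [sq_nonneg c]

/-- Inserting one element bounded by `c` into a nonempty multiset of reals bounded
by `c` changes `var` by at most `12c²/max(|S|,|S'|)`. -/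
theorem stmt4 (S : Multiset ℝ) (hS : S ≠ 0) (c : ℝ) (hb : ∀ y ∈ S, |y| ≤ c)
    (s : ℝ) (hs : |s| ≤ c) :
    |mvar S - mvar (s ::ₘ S)| ≤ 12 * c ^ 2 / ((max S.card (s ::ₘ S).card : ℕ) : ℝ) :=
  stmt4_general S c hb s hs
end

section
/- Let g be a function from nonempty finite multisets of labeled examples to nonnegative reals, and let f : ℕ → ℝ be nondecreasing such that g(S) ≤ f(|S|) for all S, and |g(S) − g(S')| ≤ f(max(|S|,|S'|))/max(|S|,|S'|) whenever the symmetric difference △(S,S') ≤ 1. Then for all S, S': |g(S) − g(S')| ≤ 3·ED*(S,S')·f(max(|S|,|S'|)), where ED*(S,S') = △(S,S')/max(|S|,|S'|). -/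
/-- Edit distance (symmetric difference size) of two multisets. -/
def symmDist {α : Type*} [DecidableEq α] (S S' : Multiset α) : ℕ :=
  (S - S').card + (S' - S).card

/-- Relative edit distance `ED*(S,S') = △(S,S') / max(|S|,|S'|)`. -/
noncomputable def edStar {α : Type*} [DecidableEq α] (S S' : Multiset α) : ℝ :=
  (symmDist S S' : ℝ) / ((max S.card S'.card : ℕ) : ℝ)

/-!
Write `n = max |S| |S'|` and `d = △(S,S')`. If `3d ≥ n`, the trivial bound
`|g S - g S'| ≤ f n` (both values lie in `[0, f n]`) suffices. Otherwise `T = S ∩ S'` has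
`|T| ≥ n - d > 2n/3`, and `S`, `S'` are reached from `T` by adding the `d` elements of
`S - S'` and `S' - S` one at a time. Every intermediate multiset has size between `|T|` and `n`,
so each step changes `g` by at most `f n / |T| ≤ 3 f n / n`.
-/

lemma symmDist_erase {α : Type*} [DecidableEq α] {U : Multiset α} {x : α} (hx : x ∈ U) :
    symmDist U (U.erase x) = 1 := by
  have hcard := Multiset.card_erase_add_one hx
  rw [symmDist, Multiset.card_sub (Multiset.erase_le x U),
    tsub_eq_zero_of_le (Multiset.erase_le x U)]
  simp only [Multiset.card_zero]
  omega

lemma max_card_le_card_inter_add_symmDist {α : Type*} [DecidableEq α] (S S' : Multiset α) :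
    max S.card S'.card ≤ (S ∩ S').card + symmDist S S' := by
  have ha : (S - S').card = S.card - (S ∩ S').card := by
    rw [← Multiset.sub_inter, Multiset.card_sub Multiset.inter_le_left]
  have hb : (S' - S).card = S'.card - (S ∩ S').card := by
    rw [← Multiset.sub_inter, Multiset.inter_comm, Multiset.card_sub Multiset.inter_le_right]
  have hTS : (S ∩ S').card ≤ S.card := Multiset.card_le_card Multiset.inter_le_left
  have hTS' : (S ∩ S').card ≤ S'.card := Multiset.card_le_card Multiset.inter_le_right
  rw [symmDist]
  omega

theorem abs_sub_add_le_card_mul {α : Type*} [DecidableEq α] (g : Multiset α → ℝ) (c : ℝ)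
    (T D : Multiset α)
    (hstep : ∀ U x, x ∈ U → T ≤ U.erase x → U ≤ T + D → |g U - g (U.erase x)| ≤ c) :
    |g (T + D) - g T| ≤ D.card * c := by
  induction D using Multiset.induction_on with
  | empty => simp
  | cons a D ih =>
    have hstep' : ∀ U x, x ∈ U → T ≤ U.erase x → U ≤ T + D →
        |g U - g (U.erase x)| ≤ c :=
      fun U x hx hT hU ↦ hstep U x hx hT (hU.trans (add_le_add_right (D.le_cons_self a) T))
    have herase : (T + a ::ₘ D).erase a = T + D := by
      rw [Multiset.add_cons, Multiset.erase_cons_head]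
    have hlast : |g (T + a ::ₘ D) - g (T + D)| ≤ c := by
      simpa only [herase] using hstep (T + a ::ₘ D) a (by simp) (by simp) le_rfl
    calc |g (T + a ::ₘ D) - g T|
        ≤ |g (T + a ::ₘ D) - g (T + D)| + |g (T + D) - g T| := abs_sub_le _ _ _
      _ ≤ c + D.card * c := add_le_add hlast (ih hstep')
      _ = (a ::ₘ D).card * c := by simp only [Multiset.card_cons]; push_cast; ring

section Smooth

variable {α : Type*} [DecidableEq α] {g : Multiset α → ℝ} {f : ℕ → ℝ}

lemma abs_sub_erase_le (hf : Monotone f)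
    (hg0 : ∀ S : Multiset α, S ≠ 0 → 0 ≤ g S)
    (hgb : ∀ S : Multiset α, S ≠ 0 → g S ≤ f S.card)
    (hsm : ∀ S S' : Multiset α, S ≠ 0 → S' ≠ 0 → symmDist S S' ≤ 1 →
      |g S - g S'| ≤ f (max S.card S'.card) / ((max S.card S'.card : ℕ) : ℝ))
    {T U : Multiset α} {x : α} {n : ℕ} (hT : T ≠ 0) (hx : x ∈ U) (hTU : T ≤ U.erase x)
    (hUn : U.card ≤ n) :
    |g U - g (U.erase x)| ≤ f n / T.card := by
  have hU : U ≠ 0 := by rintro rfl; simp at hx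
  have hUx : U.erase x ≠ 0 := ne_bot_of_le_ne_bot hT hTU
  have hmax : max U.card (U.erase x).card = U.card :=
    max_eq_left (Multiset.card_le_card (Multiset.erase_le x U))
  have hTcard : (0 : ℝ) < T.card := by exact_mod_cast Multiset.card_pos.mpr hT
  have hTU' : (T.card : ℝ) ≤ U.card := by
    exact_mod_cast Multiset.card_le_card (hTU.trans (Multiset.erase_le x U))
  have hfU : 0 ≤ f U.card := (hg0 U hU).trans (hgb U hU)
  calc |g U - g (U.erase x)| ≤ f U.card / U.card := by
        simpa only [hmax] using hsm U (U.erase x) hU hUx (symmDist_erase hx).le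
    _ ≤ f n / T.card := div_le_div₀ (hfU.trans (hf hUn)) (hf hUn) hTcard hTU'

lemma abs_sub_le_of_le (hf : Monotone f)
    (hg0 : ∀ S : Multiset α, S ≠ 0 → 0 ≤ g S)
    (hgb : ∀ S : Multiset α, S ≠ 0 → g S ≤ f S.card)
    (hsm : ∀ S S' : Multiset α, S ≠ 0 → S' ≠ 0 → symmDist S S' ≤ 1 →
      |g S - g S'| ≤ f (max S.card S'.card) / ((max S.card S'.card : ℕ) : ℝ))
    {T S : Multiset α} {n : ℕ} (hT : T ≠ 0) (hTS : T ≤ S) (hSn : S.card ≤ n) :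
    |g S - g T| ≤ (S - T).card * (f n / T.card) := by
  have hS : T + (S - T) = S := add_tsub_cancel_of_le hTS
  have := abs_sub_add_le_card_mul g (f n / T.card) T (S - T) fun U x hx hTU hU ↦
    abs_sub_erase_le hf hg0 hgb hsm hT hx hTU ((Multiset.card_le_card (hS ▸ hU)).trans hSn)
  rwa [hS] at this

lemma abs_sub_le_symmDist_mul (hf : Monotone f)
    (hg0 : ∀ S : Multiset α, S ≠ 0 → 0 ≤ g S)
    (hgb : ∀ S : Multiset α, S ≠ 0 → g S ≤ f S.card)
    (hsm : ∀ S S' : Multiset α, S ≠ 0 → S' ≠ 0 → symmDist S S' ≤ 1 →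
      |g S - g S'| ≤ f (max S.card S'.card) / ((max S.card S'.card : ℕ) : ℝ))
    {S S' : Multiset α} (hT : S ∩ S' ≠ 0) :
    |g S - g S'| ≤ symmDist S S' * (f (max S.card S'.card) / (S ∩ S').card) := by
  have h1 := abs_sub_le_of_le hf hg0 hgb hsm hT Multiset.inter_le_left (le_max_left S.card S'.card)
  have h2 := abs_sub_le_of_le hf hg0 hgb hsm hT Multiset.inter_le_right
    (le_max_right S.card S'.card)
  rw [Multiset.sub_inter] at h1
  rw [Multiset.inter_comm, Multiset.sub_inter, Multiset.inter_comm S' S] at h2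
  calc |g S - g S'| ≤ |g S - g (S ∩ S')| + |g S' - g (S ∩ S')| := by
        rw [abs_sub_comm (g S')]; exact abs_sub_le _ _ _
    _ ≤ symmDist S S' * (f (max S.card S'.card) / (S ∩ S').card) := by
        rw [symmDist]; push_cast; linarith

end Smooth

/-- If `g` is nonnegative, bounded by a nondecreasing `f` of the size, and
`f(max)/max`-smooth under single edits, then `|g(S) − g(S')| ≤ 3·ED*(S,S')·f(max(|S|,|S'|))`. -/
theorem stmt6 {α : Type*} [DecidableEq α] (g : Multiset α → ℝ) (f : ℕ → ℝ)
    (hf : Monotone f)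
    (hg0 : ∀ S : Multiset α, S ≠ 0 → 0 ≤ g S)
    (hgb : ∀ S : Multiset α, S ≠ 0 → g S ≤ f S.card)
    (hsm : ∀ S S' : Multiset α, S ≠ 0 → S' ≠ 0 → symmDist S S' ≤ 1 →
      |g S - g S'| ≤ f (max S.card S'.card) / ((max S.card S'.card : ℕ) : ℝ))
    (S S' : Multiset α) (hS : S ≠ 0) (hS' : S' ≠ 0) :
    |g S - g S'| ≤ 3 * edStar S S' * f (max S.card S'.card) := by
  set n := max S.card S'.card
  set d := symmDist S S'
  have hn : (0 : ℝ) < n := by exact_mod_cast (Multiset.card_pos.mpr hS).trans_le (le_max_left _ _)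
  have hgS : g S ≤ f n := (hgb S hS).trans (hf (le_max_left _ _))
  have hgS' : g S' ≤ f n := (hgb S' hS').trans (hf (le_max_right _ _))
  have hfn : 0 ≤ f n := (hg0 S hS).trans hgS
  rw [edStar, ← mul_div_assoc]
  rcases le_or_gt n (3 * d) with hfar | hnear
  · calc |g S - g S'| ≤ f n :=
          abs_sub_le_iff.mpr ⟨by linarith [hg0 S' hS'], by linarith [hg0 S hS]⟩
      _ ≤ 3 * d / n * f n := le_mul_of_one_le_left hfn <| by
          rw [le_div_iff₀ hn, one_mul]; exact_mod_cast hfar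
  · have hnT : n ≤ 3 * (S ∩ S').card := by
      have := max_card_le_card_inter_add_symmDist S S'
      omega
    have hT : S ∩ S' ≠ 0 := Multiset.card_pos.mp (by omega)
    have hTR : (0 : ℝ) < (S ∩ S').card := by exact_mod_cast Multiset.card_pos.mpr hT
    have hnT' : (n : ℝ) ≤ 3 * (S ∩ S').card := by exact_mod_cast hnT
    calc |g S - g S'| ≤ d * (f n / (S ∩ S').card) := abs_sub_le_symmDist_mul hf hg0 hgb hsm hT
      _ ≤ 3 * d / n * f n := by
          rw [mul_div_assoc', div_le_iff₀ hTR, div_mul_eq_mul_div, div_mul_eq_mul_div,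
            le_div_iff₀ hn]
          calc d * f n * n ≤ d * f n * (3 * (S ∩ S').card) := by gcongr
            _ = 3 * d * f n * (S ∩ S').card := by ring
end

section
/- Let σ be a split rule and let GiniGain(S,σ) = Gini(S) − (|S₀|/|S|)Gini(S₀) − (|S₁|/|S|)Gini(S₁) where (S₀,S₁) = σ(S). Then for all nonempty finite multisets S, S' of labeled examples: |GiniGain(S,σ) − GiniGain(S',σ)| ≤ 48·ED*(S,S'). -/
/-- Gini impurity of a multiset of labeled examples, labels given by `lab : α → Fin k`. -/
noncomputable def giniImp {α : Type*} {k : ℕ} (lab : α → Fin k) (S : Multiset α) : ℝ :=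
  1 - ∑ i : Fin k, (((S.filter fun x => lab x = i).card : ℝ) / (S.card : ℝ)) ^ 2

/-- Gini gain of a split rule `σ` on `S`. -/
noncomputable def giniGain {α : Type*} {k : ℕ} (lab : α → Fin k) (σ : α → Bool)
    (S : Multiset α) : ℝ :=
  giniImp lab S
    - ((S.filter fun x => σ x = false).card : ℝ) / (S.card : ℝ) *
        giniImp lab (S.filter fun x => σ x = false)
    - ((S.filter fun x => σ x = true).card : ℝ) / (S.card : ℝ) *
        giniImp lab (S.filter fun x => σ x = true)

/-!
Write `φ(T) = |T|·Gini(T) = |T| − Σᵢ cᵢ(T)²/|T|`, so that `|S|·GiniGain(S,σ) = ψ(S)` with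
`ψ(S) = φ(S) − φ(S₀) − φ(S₁)`. Inserting one example increases `φ` by an amount in `[0, 2]`, and it
increases exactly one of `φ(S₀)`, `φ(S₁)` in the same way, so `ψ` moves by at most `2` per insertion.
Passing from `S` to `S'` through `S ∩ S'` gives `|ψ(S) − ψ(S')| ≤ 2△(S,S')` and `|ψ(S)| ≤ 2|S|`;
dividing by `|S|` and `|S'|` then costs at most `2 ||S| − |S'|| ≤ 2△(S,S')` more, which yields the
bound with constant `4`.
-/

namespace Multiset

variable {α : Type*}

theorem abs_sub_add_le_mul_card {f : Multiset α → ℝ} {L : ℝ}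
    (hf : ∀ a T, |f (a ::ₘ T) - f T| ≤ L) (T U : Multiset α) :
    |f (T + U) - f T| ≤ L * U.card := by
  induction U using Multiset.induction_on with
  | empty => simp
  | cons a U ih =>
    rw [add_cons, card_cons, Nat.cast_succ, mul_add_one]
    calc |f (a ::ₘ (T + U)) - f T|
        ≤ |f (a ::ₘ (T + U)) - f (T + U)| + |f (T + U) - f T| := abs_sub_le _ _ _
      _ ≤ L * U.card + L := by linarith [hf a (T + U)]

theorem abs_sub_le_mul_symmDist [DecidableEq α] {f : Multiset α → ℝ} {L : ℝ}
    (hf : ∀ a T, |f (a ::ₘ T) - f T| ≤ L) (S S' : Multiset α) :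
    |f S - f S'| ≤ L * symmDist S S' := by
  have hS := abs_sub_add_le_mul_card hf (S ∩ S') (S - S')
  have hS' := abs_sub_add_le_mul_card hf (S' ∩ S) (S' - S)
  rw [add_comm, sub_add_inter] at hS
  rw [add_comm, sub_add_inter, inter_comm] at hS'
  rw [symmDist, Nat.cast_add, mul_add]
  calc |f S - f S'| ≤ |f S - f (S ∩ S')| + |f (S ∩ S') - f S'| := abs_sub_le _ _ _
    _ ≤ _ := by rw [abs_sub_comm (f (S ∩ S'))]; exact add_le_add hS hS'

theorem sum_card_filter_eq_card {β : Type*} [Fintype β] [DecidableEq β] (f : α → β)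
    (T : Multiset α) : ∑ b, (T.filter fun x => f x = b).card = T.card := by
  induction T using Multiset.induction_on with
  | empty => simp
  | cons a T ih => simp [filter_cons, Finset.sum_add_distrib, apply_ite, ih, add_comm]

end Multiset

theorem abs_div_sub_div_le_of_abs_le {a b n n' L : ℝ} (hn : 0 < n) (hn' : 0 < n')
    (ha : |a| ≤ L * n) (hb : |b| ≤ L * n') :
    |a / n - b / n'| ≤ (|a - b| + L * |n - n'|) / max n n' := by
  wlog h : n' ≤ n generalizing a b n n'
  · rw [abs_sub_comm a, abs_sub_comm n, max_comm, abs_sub_comm]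
    exact this hn' hn hb ha (le_of_not_ge h)
  rw [max_eq_left h, abs_of_nonneg (sub_nonneg.2 h)]
  have key : a / n - b / n' = (a - b) / n + b * (n' - n) / (n * n') := by
    field_simp; ring
  rw [key, add_div]
  refine (abs_add_le _ _).trans (add_le_add (by rw [abs_div, abs_of_pos hn]) ?_)
  rw [abs_div, abs_mul, abs_of_pos (mul_pos hn hn'), abs_of_nonpos (by linarith : n' - n ≤ 0),
    div_le_div_iff₀ (mul_pos hn hn') hn]
  nlinarith [abs_nonneg b, mul_le_mul_of_nonneg_right hb (by linarith : 0 ≤ n - n')]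

-- The increment of `m − Q/m` when an example joins a class of size `c`, where `Q = Σᵢ cᵢ²`.
theorem sub_div_sub_sub_div_mem_Icc {m c Q : ℝ} (hc : 0 ≤ c) (hcm : c ≤ m)
    (hcQ : c ^ 2 ≤ Q) (hQm : Q ≤ m ^ 2) :
    m + 1 - (Q + (2 * c + 1)) / (m + 1) - (m - Q / m) ∈ Set.Icc 0 2 := by
  rcases (hc.trans hcm).eq_or_lt with rfl | hm
  · obtain rfl : c = 0 := le_antisymm hcm hc
    obtain rfl : Q = 0 := le_antisymm (by simpa using hQm) (by simpa using hcQ)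
    norm_num
  have key : m + 1 - (Q + (2 * c + 1)) / (m + 1) - (m - Q / m)
      = ((m - c) ^ 2 + (Q - c ^ 2)) / (m * (m + 1)) := by
    field_simp; ring
  rw [key, Set.mem_Icc, div_le_iff₀ (by positivity)]
  exact ⟨by apply div_nonneg <;> nlinarith,
    by nlinarith [mul_nonneg hc (by linarith : 0 ≤ 2 * m - c)]⟩

section Gini

variable {α : Type*} {k : ℕ} (lab : α → Fin k)

noncomputable def giniMass (T : Multiset α) : ℝ := T.card * giniImp lab T

theorem giniMass_eq (T : Multiset α) :
    giniMass lab T = T.card - (∑ i, ((T.filter fun x => lab x = i).card : ℝ) ^ 2) / T.card := by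
  rw [giniMass, giniImp, mul_sub, mul_one, Finset.sum_div, Finset.mul_sum]
  congr 1
  refine Finset.sum_congr rfl fun i _ => ?_
  rcases eq_or_ne (T.card : ℝ) 0 with h | h
  · simp [h]
  · field_simp

theorem giniMass_cons_sub_mem_Icc (a : α) (T : Multiset α) :
    giniMass lab (a ::ₘ T) - giniMass lab T ∈ Set.Icc 0 2 := by
  let c : Fin k → ℝ := fun i => ((T.filter fun x => lab x = i).card : ℝ)
  have hc_nonneg : ∀ i, 0 ≤ c i := fun i => Nat.cast_nonneg _
  have hc_sum : ∑ i, c i = T.card := by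
    simp only [c]; exact_mod_cast Multiset.sum_card_filter_eq_card lab T
  have hsq_cons : ∀ i, (((a ::ₘ T).filter fun x => lab x = i).card : ℝ) ^ 2
      = c i ^ 2 + if lab a = i then 2 * c i + 1 else 0 := by
    intro i
    rw [Multiset.filter_cons, Multiset.card_add]
    split_ifs <;> simp [c]; ring
  rw [giniMass_eq, giniMass_eq, Multiset.card_cons, Nat.cast_succ]
  simp only [hsq_cons, Finset.sum_add_distrib, Finset.sum_ite_eq, Finset.mem_univ, if_true]
  exact sub_div_sub_sub_div_mem_Icc (hc_nonneg _)
    (Nat.cast_le.2 (Multiset.card_le_card (Multiset.filter_le _ _)))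
    (Finset.single_le_sum (fun i _ => sq_nonneg (c i)) (Finset.mem_univ _))
    (hc_sum ▸ Finset.sum_sq_le_sq_sum_of_nonneg fun i _ => hc_nonneg i)

variable (σ : α → Bool)

noncomputable def splitGain (T : Multiset α) : ℝ :=
  giniMass lab T - giniMass lab (T.filter fun x => σ x = false)
    - giniMass lab (T.filter fun x => σ x = true)

theorem giniGain_eq_splitGain_div {S : Multiset α} (hS : S ≠ 0) :
    giniGain lab σ S = splitGain lab σ S / S.card := by
  have hcard : (S.card : ℝ) ≠ 0 := by simpa using hS
  simp only [giniGain, splitGain, giniMass]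
  field_simp

theorem abs_splitGain_cons_sub_le (a : α) (T : Multiset α) :
    |splitGain lab σ (a ::ₘ T) - splitGain lab σ T| ≤ 2 := by
  have hT := giniMass_cons_sub_mem_Icc lab a T
  cases h : σ a
  · have hb := giniMass_cons_sub_mem_Icc lab a (T.filter fun x => σ x = false)
    rw [splitGain, splitGain, Multiset.filter_cons_of_pos (p := fun x => σ x = false) _ h,
      Multiset.filter_cons_of_neg (p := fun x => σ x = true) _ (by simp [h])]
    exact abs_le.2 ⟨by linarith [hT.1, hb.2], by linarith [hT.2, hb.1]⟩
  · have hb := giniMass_cons_sub_mem_Icc lab a (T.filter fun x => σ x = true)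
    rw [splitGain, splitGain, Multiset.filter_cons_of_pos (p := fun x => σ x = true) _ h,
      Multiset.filter_cons_of_neg (p := fun x => σ x = false) _ (by simp [h])]
    exact abs_le.2 ⟨by linarith [hT.1, hb.2], by linarith [hT.2, hb.1]⟩

theorem splitGain_zero : splitGain lab σ 0 = 0 := by simp [splitGain, giniMass]

end Gini

/-- Smoothness of the Gini gain: `|GiniGain(S,σ) − GiniGain(S',σ)| ≤ 48·ED*(S,S')`. -/
theorem stmt8 {α : Type*} [DecidableEq α] {k : ℕ} (lab : α → Fin k) (σ : α → Bool)
    (S S' : Multiset α) (hS : S ≠ 0) (hS' : S' ≠ 0) :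
    |giniGain lab σ S - giniGain lab σ S'| ≤ 48 * edStar S S' := by
  have hgain := Multiset.abs_sub_le_mul_symmDist (abs_splitGain_cons_sub_le lab σ)
  have hgain_le (T : Multiset α) : |splitGain lab σ T| ≤ 2 * T.card := by
    simpa [splitGain_zero, symmDist] using hgain T 0
  have hcard := Multiset.abs_sub_le_mul_symmDist (f := fun T : Multiset α => (T.card : ℝ))
    (L := 1) (by simp) S S'
  have hpos : (0 : ℝ) < S.card := Nat.cast_pos.2 (Multiset.card_pos.2 hS)
  have hpos' : (0 : ℝ) < S'.card := Nat.cast_pos.2 (Multiset.card_pos.2 hS')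
  rw [giniGain_eq_splitGain_div lab σ hS, giniGain_eq_splitGain_div lab σ hS', edStar,
    Nat.cast_max]
  calc _ ≤ (|splitGain lab σ S - splitGain lab σ S'| + 2 * |(S.card : ℝ) - S'.card|)
        / max (S.card : ℝ) S'.card :=
        abs_div_sub_div_le_of_abs_le hpos hpos' (hgain_le S) (hgain_le S')
    _ ≤ (2 * symmDist S S' + 2 * (1 * symmDist S S')) / max (S.card : ℝ) S'.card := by
        gcongr
        exact hgain S S'
    _ ≤ 48 * (symmDist S S' / max (S.card : ℝ) S'.card) := by
        rw [mul_div_assoc']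
        gcongr
        linarith [(Nat.cast_nonneg (symmDist S S') : (0 : ℝ) ≤ _)]
end

section
/- Let G be a conditional g-gain where g ≥ 0 satisfies g(S) ≤ f(|S|) for a nondecreasing f and |g(S)−g(S')| ≤ f(max(|S|,|S'|))/max(|S|,|S'|) when △(S,S') ≤ 1. Then for every nonempty finite multiset S and split rule σ with σ(S) = (S₀, S₁): min(|S₀|,|S₁|)/|S| ≥ G(S,σ)/(4·f(|S|)). -/
/-- Conditional `g`-gain of the split rule `σ` on `S`:
`G(S,σ) = g(S) − (|S₀|/|S|)g(S₀) − (|S₁|/|S|)g(S₁)` where `(S₀,S₁) = σ(S)`. -/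
noncomputable def condGain {α : Type*} (g : Multiset α → ℝ) (σ : α → Bool)
    (S : Multiset α) : ℝ :=
  g S - ((S.filter fun x => σ x = false).card : ℝ) / (S.card : ℝ) *
          g (S.filter fun x => σ x = false)
      - ((S.filter fun x => σ x = true).card : ℝ) / (S.card : ℝ) *
          g (S.filter fun x => σ x = true)

/-!
Split `S = A + B` with `|A| ≤ |B|`. Dropping the nonnegative `g(A)` term leaves
`G ≤ (g(S) - g(B)) + (|A|/|S|) g(B)`. The second summand is at most `(|A|/|S|) f(|S|)`. For the
first, build `S` from `B` by adding the `|A|` elements one at a time: each step changes `g` by at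
most `f(m)/m` with `m > |B| ≥ |S|/2`, so `g(S) - g(B) ≤ 2 (|A|/|S|) f(|S|)`.
-/

section

variable {α : Type*} [DecidableEq α]

def SymmDistSmooth (g : Multiset α → ℝ) (f : ℕ → ℝ) : Prop :=
  ∀ S S' : Multiset α, S ≠ 0 → S' ≠ 0 → symmDist S S' ≤ 1 →
    |g S - g S'| ≤ f (max S.card S'.card) / ((max S.card S'.card : ℕ) : ℝ)

theorem symmDist_cons_self (a : α) (T : Multiset α) : symmDist (a ::ₘ T) T = 1 := by
  have h₁ : a ::ₘ T - T = {a} := by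
    rw [← Multiset.singleton_add, add_tsub_cancel_right]
  have h₂ : T - a ::ₘ T = 0 := tsub_eq_zero_of_le (Multiset.le_cons_self T a)
  simp [symmDist, h₁, h₂]

theorem SymmDistSmooth.abs_sub_le_of_add {g : Multiset α → ℝ} {f : ℕ → ℝ}
    (hsm : SymmDistSmooth g f) (hf : Monotone f) (U : Multiset α) {T : Multiset α} {n : ℕ}
    (hT : T ≠ 0) (hn : (U + T).card ≤ n) (hfn : 0 ≤ f n) :
    |g (U + T) - g T| ≤ U.card * (f n / (T.card + 1)) := by
  induction U using Multiset.induction_on generalizing T with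
  | empty => simp
  | cons a U ih =>
    have hcard : T.card + 1 ≤ n := by
      simp only [Multiset.card_add, Multiset.card_cons] at hn; omega
    have hstep : |g (a ::ₘ T) - g T| ≤ f n / (T.card + 1) := by
      have h := hsm _ _ Multiset.cons_ne_zero hT (symmDist_cons_self a T).le
      rw [Multiset.card_cons, max_eq_left (Nat.le_succ _)] at h
      refine h.trans ?_
      push_cast
      gcongr
      exact hf hcard
    have hrest : |g (U + a ::ₘ T) - g (a ::ₘ T)| ≤ U.card * (f n / (T.card + 1)) := by
      refine (ih Multiset.cons_ne_zero (by simpa using hn)).trans ?_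
      rw [Multiset.card_cons]
      push_cast
      gcongr
      linarith
    rw [Multiset.cons_add, ← Multiset.add_cons, Multiset.card_cons]
    push_cast
    linarith [abs_sub_le (g (U + a ::ₘ T)) (g (a ::ₘ T)) (g T)]

theorem SymmDistSmooth.sub_le_of_card_le {g : Multiset α → ℝ} {f : ℕ → ℝ}
    (hsm : SymmDistSmooth g f) (hf : Monotone f) {A B : Multiset α} (hB : B ≠ 0)
    (hAB : A.card ≤ B.card) (hfn : 0 ≤ f (A + B).card) :
    g (A + B) - g B ≤ 2 * ((A.card : ℝ) / (A + B).card) * f (A + B).card := by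
  have hpos : (0 : ℝ) < (A + B).card := by
    exact_mod_cast Multiset.card_pos.2 (by simpa using fun _ => hB)
  have hhalf : ((A + B).card : ℝ) ≤ 2 * (B.card + 1) := by
    rw [Multiset.card_add]; push_cast; linarith [(Nat.cast_le (α := ℝ)).2 hAB]
  calc g (A + B) - g B ≤ A.card * (f (A + B).card / (B.card + 1)) :=
        (le_abs_self _).trans (hsm.abs_sub_le_of_add hf A hB le_rfl hfn)
    _ = A.card * (2 * f (A + B).card / (2 * (B.card + 1))) := by field_simp
    _ ≤ A.card * (2 * f (A + B).card / (A + B).card) := by gcongr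
    _ = 2 * ((A.card : ℝ) / (A + B).card) * f (A + B).card := by ring

theorem gain_le_of_card_le {g : Multiset α → ℝ} {f : ℕ → ℝ} (hf : Monotone f)
    (hg0 : ∀ S : Multiset α, S ≠ 0 → 0 ≤ g S)
    (hgb : ∀ S : Multiset α, S ≠ 0 → g S ≤ f S.card) (hsm : SymmDistSmooth g f)
    {A B : Multiset α} (hB : B ≠ 0) (hAB : A.card ≤ B.card) :
    g (A + B) - (A.card : ℝ) / (A + B).card * g A - (B.card : ℝ) / (A + B).card * g B ≤
      3 * ((A.card : ℝ) / (A + B).card) * f (A + B).card := by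
  have hS : A + B ≠ 0 := by simpa using fun _ => hB
  have hfn : 0 ≤ f (A + B).card := (hg0 _ hS).trans (hgb _ hS)
  have hpos : (0 : ℝ) < (A + B).card := by exact_mod_cast Multiset.card_pos.2 hS
  have hweights : (B.card : ℝ) / (A + B).card = 1 - (A.card : ℝ) / (A + B).card := by
    rw [eq_sub_iff_add_eq, ← add_div, div_eq_one_iff_eq hpos.ne', Multiset.card_add]
    push_cast; ring
  have hgA : 0 ≤ (A.card : ℝ) / (A + B).card * g A := by
    rcases eq_or_ne A 0 with rfl | hA
    · simp
    · exact mul_nonneg (by positivity) (hg0 A hA)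
  have hgB : g B ≤ f (A + B).card :=
    (hgb B hB).trans (hf (Multiset.card_le_card (Multiset.le_add_left B A)))
  have hgB' := mul_le_mul_of_nonneg_left hgB (by positivity : (0 : ℝ) ≤ A.card / (A + B).card)
  have hsub := hsm.sub_le_of_card_le hf hB hAB hfn
  rw [hweights]
  linarith

theorem gain_le_min_card {g : Multiset α → ℝ} {f : ℕ → ℝ} (hf : Monotone f)
    (hg0 : ∀ S : Multiset α, S ≠ 0 → 0 ≤ g S)
    (hgb : ∀ S : Multiset α, S ≠ 0 → g S ≤ f S.card) (hsm : SymmDistSmooth g f)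
    {A B : Multiset α} (hS : A + B ≠ 0) :
    g (A + B) - (A.card : ℝ) / (A + B).card * g A - (B.card : ℝ) / (A + B).card * g B ≤
      3 * ((min A.card B.card : ℕ) / (A + B).card) * f (A + B).card := by
  rcases le_total A.card B.card with hAB | hBA
  · have hB : B ≠ 0 := fun hB => hS (by simp_all)
    rw [min_eq_left hAB]
    exact gain_le_of_card_le hf hg0 hgb hsm hB hAB
  · have hA : A ≠ 0 := fun hA => hS (by simp_all)
    rw [min_eq_right hBA, add_comm A B]
    linarith [gain_le_of_card_le hf hg0 hgb hsm hA hBA]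

end

/-- Balancedness from the gain: `min(|S₀|,|S₁|)/|S| ≥ G(S,σ)/(4 f(|S|))`. -/
theorem stmt10 {α : Type*} [DecidableEq α] (g : Multiset α → ℝ) (f : ℕ → ℝ)
    (hf : Monotone f)
    (hg0 : ∀ S : Multiset α, S ≠ 0 → 0 ≤ g S)
    (hgb : ∀ S : Multiset α, S ≠ 0 → g S ≤ f S.card)
    (hsm : ∀ S S' : Multiset α, S ≠ 0 → S' ≠ 0 → symmDist S S' ≤ 1 →
      |g S - g S'| ≤ f (max S.card S'.card) / ((max S.card S'.card : ℕ) : ℝ))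
    (σ : α → Bool) (S : Multiset α) (hS : S ≠ 0) :
    condGain g σ S / (4 * f S.card) ≤
      ((min (S.filter fun x => σ x = false).card
            (S.filter fun x => σ x = true).card : ℕ) : ℝ) / (S.card : ℝ) := by
  set A := S.filter fun x => σ x = false
  set B := S.filter fun x => σ x = true
  have hsplit : A + B = S := by simpa using Multiset.filter_add_not (fun x => σ x = false) S
  have hfn : 0 ≤ f S.card := (hg0 S hS).trans (hgb S hS)
  have hmin : (0 : ℝ) ≤ ((min A.card B.card : ℕ) : ℝ) / S.card := by positivity
  refine div_le_of_le_mul₀ (by positivity) hmin ?_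
  have hgain := gain_le_min_card hf hg0 hgb hsm (hsplit.symm ▸ hS)
  rw [hsplit] at hgain
  calc condGain g σ S ≤ 3 * (((min A.card B.card : ℕ) : ℝ) / S.card) * f S.card := hgain
    _ ≤ ((min A.card B.card : ℕ) : ℝ) / S.card * (4 * f S.card) := by
      nlinarith [mul_nonneg hmin hfn]
end

section
/- Let Gini(S) = 1 − Σᵢ pᵢ(S)². If a split rule σ splits S into (S₀,S₁) and GiniGain(S,σ) ≥ α, then min(|S₀|,|S₁|) ≥ (α/16)·|S|. -/
theorem Multiset.sum_card_filter_eq_card_s11 {α β : Type*} [Fintype β] [DecidableEq β] (f : α → β)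
    (T : Multiset α) : ∑ b : β, (T.filter fun x => f x = b).card = T.card := by
  induction T using Multiset.induction with
  | empty => simp
  | cons a T ih =>
    simp only [Multiset.filter_cons, Multiset.card_add, Finset.sum_add_distrib, ih,
      Multiset.card_cons, apply_ite Multiset.card, Multiset.card_singleton, Multiset.card_zero]
    rw [Finset.sum_ite_eq Finset.univ (f a) (fun _ => 1)]
    simp [add_comm]

theorem Multiset.filter_eq_false_add_filter_eq_true {α : Type*} (σ : α → Bool) (S : Multiset α) :
    (S.filter fun x => σ x = false) + (S.filter fun x => σ x = true) = S := by
  simpa only [Bool.not_eq_false] using Multiset.filter_add_not (fun x => σ x = false) S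

theorem Multiset.card_filter_div_card_mem_Icc {α : Type*} (p : α → Prop) [DecidablePred p]
    (T : Multiset α) : ((T.filter p).card : ℝ) / T.card ∈ Set.Icc (0 : ℝ) 1 :=
  ⟨by positivity,
    div_le_one_of_le₀ (by exact_mod_cast Multiset.card_le_card (Multiset.filter_le _ _))
      (Nat.cast_nonneg _)⟩

theorem sq_sub_le_add_of_mem_Icc {x y : ℝ} (hx : x ∈ Set.Icc (0 : ℝ) 1)
    (hy : y ∈ Set.Icc (0 : ℝ) 1) : (x - y) ^ 2 ≤ x + y := by
  obtain ⟨hx0, hx1⟩ := hx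
  obtain ⟨hy0, hy1⟩ := hy
  nlinarith

theorem weighted_sq_sub_sq_weighted {R : Type*} [CommRing R] {w₀ w₁ : R} (hw : w₀ + w₁ = 1)
    (x y : R) :
    w₀ * x ^ 2 + w₁ * y ^ 2 - (w₀ * x + w₁ * y) ^ 2 = w₀ * w₁ * (x - y) ^ 2 := by
  obtain rfl : w₁ = 1 - w₀ := eq_sub_of_add_eq' hw
  ring

section Gini

variable {α : Type*} {k : ℕ} (lab : α → Fin k)

/-- `pᵢ(T)`, the fraction of `T` with label `i` (zero when `T = 0`). -/
noncomputable def labelFrac (T : Multiset α) (i : Fin k) : ℝ :=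
  ((T.filter fun x => lab x = i).card : ℝ) / (T.card : ℝ)

theorem giniImp_eq_one_sub_sum_labelFrac_sq (T : Multiset α) :
    giniImp lab T = 1 - ∑ i, labelFrac lab T i ^ 2 := rfl

theorem labelFrac_mem_Icc (T : Multiset α) (i : Fin k) : labelFrac lab T i ∈ Set.Icc (0 : ℝ) 1 :=
  Multiset.card_filter_div_card_mem_Icc _ T

theorem sum_labelFrac_le_one (T : Multiset α) : ∑ i, labelFrac lab T i ≤ 1 := by
  unfold labelFrac
  rw [← Finset.sum_div, ← Nat.cast_sum, Multiset.sum_card_filter_eq_card_s11]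
  exact div_self_le_one _

theorem labelFrac_add (T U : Multiset α) (i : Fin k) :
    labelFrac lab (T + U) i = (T.card : ℝ) / (T + U).card * labelFrac lab T i
      + (U.card : ℝ) / (T + U).card * labelFrac lab U i := by
  have weight_mul (V : Multiset α) :
      (V.card : ℝ) / (T + U).card * labelFrac lab V i
        = ((V.filter fun x => lab x = i).card : ℝ) / (T + U).card := by
    rcases eq_or_ne V 0 with rfl | hV
    · simp [labelFrac]
    · have : (V.card : ℝ) ≠ 0 := Nat.cast_ne_zero.2 (Multiset.card_eq_zero.not.2 hV)
      unfold labelFrac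
      field_simp
  rw [weight_mul, weight_mul, labelFrac, Multiset.filter_add, Multiset.card_add, Nat.cast_add,
    add_div]

theorem giniImp_add_sub_weighted {T U : Multiset α} (h : T + U ≠ 0) :
    giniImp lab (T + U) - (T.card : ℝ) / (T + U).card * giniImp lab T
        - (U.card : ℝ) / (T + U).card * giniImp lab U
      = (T.card : ℝ) / (T + U).card * ((U.card : ℝ) / (T + U).card)
          * ∑ i, (labelFrac lab T i - labelFrac lab U i) ^ 2 := by
  have hw : (T.card : ℝ) / (T + U).card + (U.card : ℝ) / (T + U).card = 1 := by
    rw [← add_div, ← Nat.cast_add, ← Multiset.card_add,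
      div_self (Nat.cast_ne_zero.2 (Multiset.card_eq_zero.not.2 h))]
  simp only [giniImp_eq_one_sub_sum_labelFrac_sq, labelFrac_add, mul_sub, mul_one, Finset.mul_sum,
    ← weighted_sq_sub_sq_weighted hw, Finset.sum_sub_distrib, Finset.sum_add_distrib]
  linear_combination (-1 : ℝ) * hw

end Gini

section Split

variable {α : Type*} {k : ℕ} (lab : α → Fin k) (σ : α → Bool) {S : Multiset α}

theorem giniGain_eq (hS : S ≠ 0) :
    giniGain lab σ S
      = ((S.filter fun x => σ x = false).card : ℝ) / S.card
          * (((S.filter fun x => σ x = true).card : ℝ) / S.card)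
          * ∑ i, (labelFrac lab (S.filter fun x => σ x = false) i
              - labelFrac lab (S.filter fun x => σ x = true) i) ^ 2 := by
  have hsplit := Multiset.filter_eq_false_add_filter_eq_true σ S
  unfold giniGain
  set S₀ := S.filter fun x => σ x = false
  set S₁ := S.filter fun x => σ x = true
  rw [← hsplit] at hS ⊢
  exact giniImp_add_sub_weighted lab hS

theorem giniGain_le_two_mul_min_div (hS : S ≠ 0) :
    giniGain lab σ S
      ≤ 2 * ((min (S.filter fun x => σ x = false).card
            (S.filter fun x => σ x = true).card : ℕ) : ℝ) / S.card := by
  set S₀ := S.filter fun x => σ x = false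
  set S₁ := S.filter fun x => σ x = true
  obtain ⟨hw₀, hw₀'⟩ := Multiset.card_filter_div_card_mem_Icc (fun x => σ x = false) S
  obtain ⟨hw₁, hw₁'⟩ := Multiset.card_filter_div_card_mem_Icc (fun x => σ x = true) S
  have hdist : ∑ i, (labelFrac lab S₀ i - labelFrac lab S₁ i) ^ 2 ≤ 2 :=
    calc ∑ i, (labelFrac lab S₀ i - labelFrac lab S₁ i) ^ 2
        ≤ ∑ i, (labelFrac lab S₀ i + labelFrac lab S₁ i) :=
          Finset.sum_le_sum fun i _ =>
            sq_sub_le_add_of_mem_Icc (labelFrac_mem_Icc lab S₀ i) (labelFrac_mem_Icc lab S₁ i)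
      _ ≤ 2 := by
          rw [Finset.sum_add_distrib]
          linarith [sum_labelFrac_le_one lab S₀, sum_labelFrac_le_one lab S₁]
  have hweights : (S₀.card : ℝ) / S.card * ((S₁.card : ℝ) / S.card)
      ≤ ((min S₀.card S₁.card : ℕ) : ℝ) / S.card := by
    rw [Nat.cast_min, ← min_div_div_right (Nat.cast_nonneg _)]
    exact le_min (mul_le_of_le_one_right hw₀ hw₁') (mul_le_of_le_one_left hw₁ hw₀')
  rw [giniGain_eq lab σ hS, mul_div_assoc, mul_comm 2]
  exact mul_le_mul hweights hdist (by positivity) (by positivity)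

end Split

theorem stmt11_general {α : Type*} {k : ℕ} (lab : α → Fin k) (σ : α → Bool)
    (S : Multiset α) (hS : S ≠ 0) (a : ℝ) (hgain : a ≤ giniGain lab σ S) :
    a / 16 * (S.card : ℝ) ≤
      ((min (S.filter fun x => σ x = false).card
            (S.filter fun x => σ x = true).card : ℕ) : ℝ) := by
  have hn : (0 : ℝ) < S.card := by exact_mod_cast Multiset.card_pos.2 hS
  have ha := hgain.trans (giniGain_le_two_mul_min_div lab σ hS)
  rw [le_div_iff₀ hn] at ha
  have hmin : (0 : ℝ) ≤ ((min (S.filter fun x => σ x = false).card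
      (S.filter fun x => σ x = true).card : ℕ) : ℝ) := Nat.cast_nonneg _
  rcases le_total 0 a with ha₀ | ha₀ <;> nlinarith

/-- If a split rule has Gini gain at least `α` on `S`, then both sides of the split
contain at least `(α/16)·|S|` examples. -/
theorem stmt11 {α : Type*} [DecidableEq α] {k : ℕ} (lab : α → Fin k) (σ : α → Bool)
    (S : Multiset α) (hS : S ≠ 0) (a : ℝ) (hgain : a ≤ giniGain lab σ S) :
    a / 16 * (S.card : ℝ) ≤
      ((min (S.filter fun x => σ x = false).card
            (S.filter fun x => σ x = true).card : ℕ) : ℝ) :=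
  stmt11_general lab σ S hS a hgain
end

section
/- Let X and X' be random variables on a common probability space, each taking at most n ≥ 2 distinct values, with total variation distance δ = d_TV(X, X'). Then |H(X) − H(X')| ≤ δ·log₂(n−1) + H(δ), where H is Shannon entropy in bits and H(δ) is binary entropy. -/
/-!
Write `m = min p q`, so that `p = m + u` and `q = m + v` with `u, v ≥ 0`, `∑ u = ∑ v = δ` and
`∑ m = 1 - δ`. Subadditivity of `η = negMulLog` gives `H(p) ≤ ∑ η(m) + ∑ η(u)`, and `u` vanishes
where `p ≤ q`, so it lives on at most `n - 1` points and `∑ η(u) ≤ η(δ) + δ log(n - 1)`.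
Concavity of `η` gives the mixture bound `H(q) ≥ ∑ η(m) + ∑ η(v) - η(1 - δ) - η(δ)`, and
`∑ η(v) ≥ η(δ)` again by subadditivity. Hence
`H(p) - H(q) ≤ δ log(n - 1) + η(δ) + η(1 - δ)`, and symmetrically with `p` and `q` exchanged.
-/

open Finset

namespace Real

lemma mul_log_le_mul_log_add {x y : ℝ} (hx : 0 ≤ x) (hy : 0 ≤ y) :
    x * log x ≤ x * log (x + y) := by
  rcases hx.eq_or_lt with rfl | hx
  · simp
  exact mul_le_mul_of_nonneg_left (log_le_log hx (by linarith)) hx.le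

lemma negMulLog_add_le {x y : ℝ} (hx : 0 ≤ x) (hy : 0 ≤ y) :
    negMulLog (x + y) ≤ negMulLog x + negMulLog y := by
  have hxy := mul_log_le_mul_log_add hx hy
  have hyx := mul_log_le_mul_log_add hy hx
  rw [add_comm y] at hyx
  simp only [negMulLog, neg_mul]
  linarith

lemma negMulLog_sum_le {ι : Type*} {s : Finset ι} {w : ι → ℝ} (hw : ∀ i ∈ s, 0 ≤ w i) :
    negMulLog (∑ i ∈ s, w i) ≤ ∑ i ∈ s, negMulLog (w i) :=
  le_sum_of_subadditive_on_pred negMulLog (0 ≤ ·) negMulLog_zero.le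
    (fun _ _ => negMulLog_add_le) (fun _ _ => add_nonneg) w hw

lemma mul_negMulLog_div {c : ℝ} (hc : 0 < c) (x : ℝ) :
    c * negMulLog (x / c) = negMulLog x + x * log c := by
  rcases eq_or_ne x 0 with rfl | hx
  · simp
  rw [negMulLog, negMulLog, log_div hx hc.ne']
  field_simp
  ring

/-- Concavity of the perspective `(a, x) ↦ a η(x / a)`, via `c η(x / c) = η(x) + x log c`. -/
lemma negMulLog_add_mul_log_add_le {a b x y : ℝ} (ha : 0 < a) (hb : 0 < b) (hx : 0 ≤ x)
    (hy : 0 ≤ y) :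
    negMulLog x + x * log a + (negMulLog y + y * log b) ≤
      negMulLog (x + y) + (x + y) * log (a + b) := by
  have hab : 0 < a + b := add_pos ha hb
  have h := concaveOn_negMulLog.2 (Set.mem_Ici.2 (div_nonneg hx ha.le))
    (Set.mem_Ici.2 (div_nonneg hy hb.le)) (div_pos ha hab).le (div_pos hb hab).le
    (by rw [← add_div, div_self hab.ne'])
  have hmid : (a / (a + b)) • (x / a) + (b / (a + b)) • (y / b) = (x + y) / (a + b) := by
    simp only [smul_eq_mul]
    field_simp
  rw [hmid, smul_eq_mul, smul_eq_mul, ← mul_le_mul_iff_of_pos_left hab, mul_add, ← mul_assoc,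
    ← mul_assoc, mul_div_cancel₀ _ hab.ne', mul_div_cancel₀ _ hab.ne', mul_negMulLog_div ha,
    mul_negMulLog_div hb, mul_negMulLog_div hab] at h
  exact h

lemma le_sum_negMulLog_add {ι : Type*} {s : Finset ι} {m v : ι → ℝ}
    (hm : ∀ i ∈ s, 0 ≤ m i) (hv : ∀ i ∈ s, 0 ≤ v i) :
    ∑ i ∈ s, negMulLog (m i) + ∑ i ∈ s, negMulLog (v i) - negMulLog (∑ i ∈ s, m i) -
        negMulLog (∑ i ∈ s, v i) ≤
      ∑ i ∈ s, negMulLog (m i + v i) - negMulLog (∑ i ∈ s, m i + ∑ i ∈ s, v i) := by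
  rcases (sum_nonneg hm).eq_or_lt with hA | hA
  · have hm0 := (sum_eq_zero_iff_of_nonneg hm).1 hA.symm
    have hmv : ∑ i ∈ s, negMulLog (m i + v i) = ∑ i ∈ s, negMulLog (v i) :=
      sum_congr rfl fun i hi => by rw [hm0 i hi, zero_add]
    have hmη : ∑ i ∈ s, negMulLog (m i) = 0 :=
      sum_eq_zero fun i hi => by rw [hm0 i hi, negMulLog_zero]
    rw [← hA, hmv, hmη]
    simp
  rcases (sum_nonneg hv).eq_or_lt with hB | hB
  · have hv0 := (sum_eq_zero_iff_of_nonneg hv).1 hB.symm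
    have hmv : ∑ i ∈ s, negMulLog (m i + v i) = ∑ i ∈ s, negMulLog (m i) :=
      sum_congr rfl fun i hi => by rw [hv0 i hi, add_zero]
    have hvη : ∑ i ∈ s, negMulLog (v i) = 0 :=
      sum_eq_zero fun i hi => by rw [hv0 i hi, negMulLog_zero]
    rw [← hB, hmv, hvη]
    simp
  have h := sum_le_sum fun i hi => negMulLog_add_mul_log_add_le hA hB (hm i hi) (hv i hi)
  simp only [sum_add_distrib, ← sum_mul] at h
  simp only [negMulLog] at h ⊢
  linarith

lemma sum_negMulLog_le_mul_log_card {ι : Type*} (s : Finset ι) {w : ι → ℝ}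
    (hw : ∀ i ∈ s, 0 ≤ w i) :
    ∑ i ∈ s, negMulLog (w i) ≤ negMulLog (∑ i ∈ s, w i) + (∑ i ∈ s, w i) * log #s := by
  rcases s.eq_empty_or_nonempty with rfl | hs
  · simp
  have hk : (0 : ℝ) < #s := by exact_mod_cast hs.card_pos
  have h := concaveOn_negMulLog.le_map_sum (t := s) (w := fun _ => (#s : ℝ)⁻¹) (p := w)
    (fun _ _ => inv_nonneg.2 hk.le) (by simp [hk.ne']) hw
  simp only [smul_eq_mul, inv_mul_eq_div, ← sum_div] at h
  rw [← mul_negMulLog_div hk, ← div_le_iff₀' hk]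
  exact h

end Real

open Real

lemma sum_negMulLog_le_of_eq_zero {ι : Type*} [Fintype ι] [DecidableEq ι] {w : ι → ℝ}
    (hw : ∀ i, 0 ≤ w i) {j : ι} (hj : w j = 0) :
    ∑ i, negMulLog (w i) ≤
      negMulLog (∑ i, w i) + (∑ i, w i) * log (Fintype.card ι - 1) := by
  have h := sum_negMulLog_le_mul_log_card (univ.erase j) fun i _ => hw i
  rwa [sum_erase _ (by rw [hj, negMulLog_zero]), sum_erase _ hj, card_erase_of_mem (mem_univ j),
    card_univ, Nat.cast_pred (Fintype.card_pos_iff.2 ⟨j⟩)] at h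

lemma sum_sub_min_eq_half_sum_abs {ι : Type*} [Fintype ι] {p q : ι → ℝ}
    (h : ∑ i, p i = ∑ i, q i) :
    ∑ i, (p i - min (p i) (q i)) = (∑ i, |p i - q i|) / 2 := by
  have hpt : ∀ i, p i - min (p i) (q i) = (|p i - q i| + (p i - q i)) / 2 := fun i => by
    rcases le_total (p i) (q i) with hpq | hpq
    · rw [min_eq_left hpq, abs_of_nonpos (sub_nonpos.2 hpq)]; ring
    · rw [min_eq_right hpq, abs_of_nonneg (sub_nonneg.2 hpq)]; ring
  simp only [hpt, ← sum_div, sum_add_distrib, sum_sub_distrib, h, sub_self, add_zero]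

lemma sum_negMulLog_sub_sum_negMulLog_le {ι : Type*} [Fintype ι] {p q : ι → ℝ}
    (hp0 : ∀ i, 0 ≤ p i) (hp1 : ∑ i, p i = 1) (hq0 : ∀ i, 0 ≤ q i) (hq1 : ∑ i, q i = 1)
    {δ : ℝ} (hδ : δ = (∑ i, |p i - q i|) / 2) :
    ∑ i, negMulLog (p i) - ∑ i, negMulLog (q i) ≤
      δ * log (Fintype.card ι - 1) + (negMulLog δ + negMulLog (1 - δ)) := by
  classical
  set m := fun i => min (p i) (q i)
  have hm0 : ∀ i, 0 ≤ m i := fun i => le_min (hp0 i) (hq0 i)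
  have hu0 : ∀ i, 0 ≤ p i - m i := fun i => sub_nonneg.2 (min_le_left _ _)
  have hv0 : ∀ i, 0 ≤ q i - m i := fun i => sub_nonneg.2 (min_le_right _ _)
  have hu : ∑ i, (p i - m i) = δ := by
    rw [hδ]; exact sum_sub_min_eq_half_sum_abs (hp1.trans hq1.symm)
  have hv : ∑ i, (q i - m i) = δ := by
    simp only [m, min_comm (p _), hδ, abs_sub_comm (p _)]
    exact sum_sub_min_eq_half_sum_abs (hq1.trans hp1.symm)
  have hm : ∑ i, m i = 1 - δ := by
    rw [← hp1, ← hu, ← sum_sub_distrib]; simp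
  obtain ⟨j, -, hj⟩ := exists_le_of_sum_le
    (nonempty_of_sum_ne_zero (hp1 ▸ one_ne_zero)) (hp1.trans hq1.symm).le
  have hpH : ∑ i, negMulLog (p i) ≤
      ∑ i, negMulLog (m i) + (negMulLog δ + δ * log (Fintype.card ι - 1)) := by
    calc ∑ i, negMulLog (p i) = ∑ i, negMulLog (m i + (p i - m i)) := by simp
      _ ≤ ∑ i, negMulLog (m i) + ∑ i, negMulLog (p i - m i) := by
        rw [← sum_add_distrib]; exact sum_le_sum fun i _ => negMulLog_add_le (hm0 i) (hu0 i)
      _ ≤ _ := by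
        grw [sum_negMulLog_le_of_eq_zero hu0 (j := j) (by simp [m, min_eq_left hj]), hu]
  have hqH : ∑ i, negMulLog (m i) - negMulLog (1 - δ) ≤ ∑ i, negMulLog (q i) := by
    have hmix := le_sum_negMulLog_add (s := univ) (fun i _ => hm0 i) (fun i _ => hv0 i)
    have hvH := negMulLog_sum_le (s := univ) fun i _ => hv0 i
    simp only [hm, hv, add_sub_cancel, sub_add_cancel, negMulLog_one] at hmix hvH
    linarith
  linarith

theorem stmt16_general (n : ℕ) (p q : Fin n → ℝ)
    (hp0 : ∀ x, 0 ≤ p x) (hp1 : ∑ x, p x = 1)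
    (hq0 : ∀ x, 0 ≤ q x) (hq1 : ∑ x, q x = 1)
    (δ : ℝ) (hδ : δ = (∑ x, |p x - q x|) / 2) :
    |(∑ x, p x * Real.logb 2 (1 / p x)) - ∑ x, q x * Real.logb 2 (1 / q x)| ≤
      δ * Real.logb 2 ((n : ℝ) - 1) +
        (δ * Real.logb 2 (1 / δ) + (1 - δ) * Real.logb 2 (1 / (1 - δ))) := by
  have hbits : ∀ t : ℝ, t * logb 2 (1 / t) = negMulLog t / log 2 := fun t => by
    rw [logb, one_div, log_inv, negMulLog]; ring
  have hlog2 : 0 < log 2 := log_pos one_lt_two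
  simp only [hbits]
  simp only [logb, ← mul_div_assoc, ← sum_div, ← sub_div, ← add_div, abs_div, abs_of_pos hlog2]
  gcongr
  have hδ' : δ = (∑ x, |q x - p x|) / 2 := by simp only [abs_sub_comm (q _), hδ]
  have hpq := sum_negMulLog_sub_sum_negMulLog_le hp0 hp1 hq0 hq1 hδ
  have hqp := sum_negMulLog_sub_sum_negMulLog_le hq0 hq1 hp0 hp1 hδ'
  rw [Fintype.card_fin] at hpq hqp
  exact abs_sub_le_iff.2 ⟨hpq, hqp⟩

/-- Fannes–Audenaert inequality for classical probability distributions on at most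
`n` points: `|H(p) − H(q)| ≤ δ·log₂(n−1) + H(δ)` where `δ` is the total variation
distance and `H` is the Shannon entropy in bits (`H(δ)` is the binary entropy). -/
theorem stmt16 (n : ℕ) (hn : 2 ≤ n) (p q : Fin n → ℝ)
    (hp0 : ∀ x, 0 ≤ p x) (hp1 : ∑ x, p x = 1)
    (hq0 : ∀ x, 0 ≤ q x) (hq1 : ∑ x, q x = 1)
    (δ : ℝ) (hδ : δ = (∑ x, |p x - q x|) / 2) :
    |(∑ x, p x * Real.logb 2 (1 / p x)) - ∑ x, q x * Real.logb 2 (1 / q x)| ≤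
      δ * Real.logb 2 ((n : ℝ) - 1) +
        (δ * Real.logb 2 (1 / δ) + (1 - δ) * Real.logb 2 (1 / (1 - δ))) :=
  stmt16_general n p q hp0 hp1 hq0 hq1 δ hδ
end

section
/- Let σ be a split rule and G a conditional g-gain with g ≥ 0 bounded by a nondecreasing f (g(S) ≤ f(|S|)) and one-edit smooth (|g(S)−g(S')| ≤ f(n)/n for △(S,S') ≤ 1, n = max(|S|,|S'|)). If S' = S + s with σ assigning s to side 1 (so S₀' = S₀ and S₁' = S₁ + s), then |G(S,σ) − G(S',σ)| ≤ 4·f(n)/n where n = |S'|. -/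
/-!
Write `w(T) = |T| g(T)`, so that `G(S,σ) = g(S) − (w(S₀) + w(S₁))/|S|`. With `m = |S|` and
`W = w(S₀) + w(S₁)`, inserting `s` on side 1 gives
`G(S,σ) − G(S',σ) = (g(S) − g(S')) − W/(m(m+1)) + (w(S₁') − w(S₁))/(m+1)`.
The first term is one-edit smoothness, the second is at most `f(n)/n` because `0 ≤ W ≤ m f(n)`,
and `|w(S₁ + s) − w(S₁)| ≤ (|S₁|+1)|g(S₁ + s) − g(S₁)| + g(S₁) ≤ 2 f(n)`
(for `S₁ = ∅` simply `w(S₁ + s) = g({s}) ≤ f(n)`, whatever the value of `g ∅`).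
-/

namespace Multiset

variable {α : Type*}

theorem card_filter_false_add_card_filter_true (σ : α → Bool) (S : Multiset α) :
    (S.filter fun x => σ x = false).card + (S.filter fun x => σ x = true).card = S.card := by
  have h := congrArg card (filter_add_not (fun x => σ x = true) S)
  simp only [card_add, Bool.not_eq_true] at h
  omega

theorem symmDist_cons_self_le [DecidableEq α] (s : α) (T : Multiset α) :
    symmDist T (s ::ₘ T) ≤ 1 := by
  have hle : T - s ::ₘ T = 0 := tsub_eq_zero_of_le (le_cons_self T s)
  have hsub : s ::ₘ T - T = {s} := by rw [← singleton_add, add_tsub_cancel_right]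
  simp [symmDist, hle, hsub]

end Multiset

open Multiset

theorem condGain_eq_sub_div {α : Type*} (g : Multiset α → ℝ) (σ : α → Bool) (S : Multiset α) :
    condGain g σ S = g S - (((S.filter fun x => σ x = false).card : ℝ) *
        g (S.filter fun x => σ x = false) + ((S.filter fun x => σ x = true).card : ℝ) *
        g (S.filter fun x => σ x = true)) / S.card := by
  rw [condGain, add_div, mul_div_right_comm, mul_div_right_comm _ (g _)]
  ring

theorem abs_sub_sub_div_add_div_le {m F a W D : ℝ} (hm : 0 < m) (ha : |a| ≤ F / (m + 1))
    (hW₀ : 0 ≤ W) (hW : W ≤ m * F) (hD : |D| ≤ 2 * F) :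
    |a - W / m + (W + D) / (m + 1)| ≤ 4 * F / (m + 1) := by
  have hsplit : a - W / m + (W + D) / (m + 1) = a - W / (m * (m + 1)) + D / (m + 1) := by
    field_simp
    ring
  have hWdiv : |W / (m * (m + 1))| ≤ F / (m + 1) := by
    rw [abs_of_nonneg (by positivity), div_le_div_iff₀ (by positivity) (by positivity)]
    nlinarith
  have hDdiv : |D / (m + 1)| ≤ 2 * F / (m + 1) := by
    rw [abs_div, abs_of_pos (by positivity : (0 : ℝ) < m + 1)]
    gcongr
  calc |a - W / m + (W + D) / (m + 1)|
      ≤ |a| + |W / (m * (m + 1))| + |D / (m + 1)| := by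
        rw [hsplit]
        exact (abs_add_le _ _).trans (by gcongr; exact abs_sub _ _)
    _ ≤ F / (m + 1) + F / (m + 1) + 2 * F / (m + 1) := by gcongr
    _ = 4 * F / (m + 1) := by ring

section Insertion

variable {α : Type*} {g : Multiset α → ℝ} {f : ℕ → ℝ}

theorem abs_sub_cons_le [DecidableEq α]
    (hsm : ∀ S S' : Multiset α, S ≠ 0 → S' ≠ 0 → symmDist S S' ≤ 1 →
      |g S - g S'| ≤ f (max S.card S'.card) / ((max S.card S'.card : ℕ) : ℝ))
    {T : Multiset α} (hT : T ≠ 0) (s : α) :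
    |g T - g (s ::ₘ T)| ≤ f (T.card + 1) / (T.card + 1) := by
  have h := hsm T (s ::ₘ T) hT cons_ne_zero (symmDist_cons_self_le s T)
  rwa [card_cons, max_eq_right (Nat.le_succ _), Nat.cast_succ] at h

theorem card_mul_nonneg (hg0 : ∀ S : Multiset α, S ≠ 0 → 0 ≤ g S) (T : Multiset α) :
    0 ≤ (T.card : ℝ) * g T := by
  rcases eq_or_ne T 0 with rfl | hT
  · simp
  · exact mul_nonneg (Nat.cast_nonneg _) (hg0 T hT)

theorem card_mul_le (hf : Monotone f) (hgb : ∀ S : Multiset α, S ≠ 0 → g S ≤ f S.card)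
    {T : Multiset α} {m : ℕ} (hm : T.card ≤ m) :
    (T.card : ℝ) * g T ≤ T.card * f m := by
  rcases eq_or_ne T 0 with rfl | hT
  · simp
  · exact mul_le_mul_of_nonneg_left ((hgb T hT).trans (hf hm)) (Nat.cast_nonneg _)

theorem abs_card_mul_cons_sub_le [DecidableEq α] (hf : Monotone f)
    (hg0 : ∀ S : Multiset α, S ≠ 0 → 0 ≤ g S)
    (hgb : ∀ S : Multiset α, S ≠ 0 → g S ≤ f S.card)
    (hsm : ∀ S S' : Multiset α, S ≠ 0 → S' ≠ 0 → symmDist S S' ≤ 1 →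
      |g S - g S'| ≤ f (max S.card S'.card) / ((max S.card S'.card : ℕ) : ℝ))
    (s : α) (T : Multiset α) :
    |((s ::ₘ T).card : ℝ) * g (s ::ₘ T) - T.card * g T| ≤ 2 * f (T.card + 1) := by
  have hcons₀ : 0 ≤ g (s ::ₘ T) := hg0 _ cons_ne_zero
  have hcons : g (s ::ₘ T) ≤ f (T.card + 1) := card_cons s T ▸ hgb _ cons_ne_zero
  rcases eq_or_ne T 0 with rfl | hT
  · simp only [card_cons, card_zero, Nat.cast_succ, Nat.cast_zero, zero_mul, sub_zero]
    rw [card_zero] at hcons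
    rw [zero_add, one_mul, abs_of_nonneg hcons₀]
    linarith
  have hT₀ : 0 ≤ g T := hg0 T hT
  have hTb : g T ≤ f (T.card + 1) := (hgb T hT).trans (hf (Nat.le_succ _))
  have hpos : (0 : ℝ) < T.card + 1 := by positivity
  have hsplit : ((s ::ₘ T).card : ℝ) * g (s ::ₘ T) - T.card * g T
      = (T.card + 1) * (g (s ::ₘ T) - g T) + g T := by
    rw [card_cons, Nat.cast_succ]
    ring
  have hsmooth : (T.card + 1) * |g (s ::ₘ T) - g T| ≤ f (T.card + 1) := by
    rw [abs_sub_comm, ← le_div_iff₀' hpos]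
    exact abs_sub_cons_le hsm hT s
  calc |((s ::ₘ T).card : ℝ) * g (s ::ₘ T) - T.card * g T|
      ≤ (T.card + 1) * |g (s ::ₘ T) - g T| + g T := by
        rw [hsplit]
        refine (abs_add_le _ _).trans ?_
        rw [abs_mul, abs_of_pos hpos, abs_of_nonneg hT₀]
    _ ≤ 2 * f (T.card + 1) := by linarith

end Insertion

/-- Unit-insertion smoothness of the conditional gain: if `g` is nonnegative, bounded
by a nondecreasing `f`, and one-edit smooth, and `S' = S + s` with `σ` assigning `s`
to side `1`, then `|G(S,σ) − G(S',σ)| ≤ 4 f(n)/n` with `n = |S'|`. -/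
theorem stmt19 {α : Type*} [DecidableEq α] (g : Multiset α → ℝ) (f : ℕ → ℝ)
    (hf : Monotone f)
    (hg0 : ∀ S : Multiset α, S ≠ 0 → 0 ≤ g S)
    (hgb : ∀ S : Multiset α, S ≠ 0 → g S ≤ f S.card)
    (hsm : ∀ S S' : Multiset α, S ≠ 0 → S' ≠ 0 → symmDist S S' ≤ 1 →
      |g S - g S'| ≤ f (max S.card S'.card) / ((max S.card S'.card : ℕ) : ℝ))
    (σ : α → Bool) (S : Multiset α) (hS : S ≠ 0) (s : α) (hside : σ s = true)
    (n : ℕ) (hn : n = S.card + 1) :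
    |condGain g σ S - condGain g σ (s ::ₘ S)| ≤ 4 * f n / (n : ℝ) := by
  subst hn
  set S₀ := S.filter fun x => σ x = false with hS₀_def
  set S₁ := S.filter fun x => σ x = true with hS₁_def
  have hS₀ : ((s ::ₘ S).filter fun x => σ x = false) = S₀ := filter_cons_of_neg _ (by simp [hside])
  have hS₁ : ((s ::ₘ S).filter fun x => σ x = true) = s ::ₘ S₁ := filter_cons_of_pos _ hside
  have hcard : S₀.card + S₁.card = S.card := card_filter_false_add_card_filter_true σ S
  have hW : (S₀.card : ℝ) * g S₀ + S₁.card * g S₁ ≤ S.card * f (S.card + 1) :=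
    calc (S₀.card : ℝ) * g S₀ + S₁.card * g S₁
        ≤ S₀.card * f (S.card + 1) + S₁.card * f (S.card + 1) :=
          add_le_add (card_mul_le hf hgb (by omega)) (card_mul_le hf hgb (by omega))
      _ = S.card * f (S.card + 1) := by rw [← add_mul, ← Nat.cast_add, hcard]
  have hD : |((s ::ₘ S₁).card : ℝ) * g (s ::ₘ S₁) - S₁.card * g S₁| ≤ 2 * f (S.card + 1) :=
    (abs_card_mul_cons_sub_le hf hg0 hgb hsm s S₁).trans (by gcongr; exact hf (by omega))
  have hdiff : condGain g σ S - condGain g σ (s ::ₘ S)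
      = (g S - g (s ::ₘ S)) - (S₀.card * g S₀ + S₁.card * g S₁) / S.card
        + ((S₀.card * g S₀ + S₁.card * g S₁)
          + (((s ::ₘ S₁).card : ℝ) * g (s ::ₘ S₁) - S₁.card * g S₁)) / (S.card + 1) := by
    rw [condGain_eq_sub_div, condGain_eq_sub_div, hS₀, hS₁, ← hS₀_def, ← hS₁_def]
    simp only [card_cons, Nat.cast_succ]
    ring
  rw [hdiff, Nat.cast_succ]
  exact abs_sub_sub_div_add_div_le (Nat.cast_pos.2 (card_pos.2 hS)) (abs_sub_cons_le hsm hS s)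
    (add_nonneg (card_mul_nonneg hg0 S₀) (card_mul_nonneg hg0 S₁)) hW hD
end
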